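/- arXiv:2004.11859 — 10 statements merged into one kernel-verified Lean document; each statement's English description precedes it below -/
import Mathlib

section
/- Let p be a prime, n a positive integer, F a bijection of the finite field 𝔽_{p^n} with compositional inverse F⁻¹, and c ∈ 𝔽_{p^n} with c ≠ 0. Then for all a, b ∈ 𝔽_{p^n}, the number of x ∈ 𝔽_{p^n} satisfying F⁻¹(c⁻¹·F(x+a) + b) − F⁻¹(c·F(x) + b) = a equals the number of pairs (x, γ) ∈ 𝔽_{p^n} × 𝔽_{p^n} satisfying both F(x+γ) − c·F(x) = b and F(x+γ+a) − c⁻¹·F(x+a) = b. -/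
/-- For a bijection `F` of `𝔽_{p^n}` (given as an `Equiv`, whose inverse
`F.symm` is the compositional inverse) and `c ≠ 0`, the `c`-BCT entry defined via the
compositional inverse equals the count of solutions of the `c`-boomerang system. -/
theorem cBCT_eq_boomerang_system (p n : ℕ) [Fact p.Prime] (hn : 0 < n)
    (F : GaloisField p n ≃ GaloisField p n)
    (c : GaloisField p n) (hc : c ≠ 0) (a b : GaloisField p n) :
    Nat.card {x : GaloisField p n //
        F.symm (c⁻¹ * F (x + a) + b) - F.symm (c * F x + b) = a} =
      Nat.card {xg : GaloisField p n × GaloisField p n //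
        F (xg.1 + xg.2) - c * F xg.1 = b ∧
        F (xg.1 + xg.2 + a) - c⁻¹ * F (xg.1 + a) = b} := by
  apply Nat.card_congr
  refine ⟨fun x => ⟨(x.1, F.symm (c * F x.1 + b) - x.1), ?_, ?_⟩,
          fun xg => ⟨xg.1.1, ?_⟩, ?_, ?_⟩
  · simp
  · obtain ⟨x, hx⟩ := x
    have h1 : x + (F.symm (c * F x + b) - x) + a = F.symm (c⁻¹ * F (x + a) + b) := by
      have := eq_add_of_sub_eq hx
      rw [this]; ring
    rw [h1]; simp
  · obtain ⟨⟨x, g⟩, h1, h2⟩ := xg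
    have e1 : F.symm (c * F x + b) = x + g := by
      rw [Equiv.symm_apply_eq, eq_comm, ← sub_eq_iff_eq_add', ← h1]
    have e2 : F.symm (c⁻¹ * F (x + a) + b) = x + g + a := by
      rw [Equiv.symm_apply_eq, eq_comm, ← sub_eq_iff_eq_add', ← h2]
    simp only [e1, e2]; ring
  · intro x; rfl
  · rintro ⟨⟨x, g⟩, h1, h2⟩
    have e1 : F.symm (c * F x + b) = x + g := by
      rw [Equiv.symm_apply_eq, eq_comm, ← sub_eq_iff_eq_add', ← h1]
    simp [e1]
end

section
/- Let p be a prime, n, m positive integers, F: 𝔽_{p^n} → 𝔽_{p^m}, c ∈ 𝔽_{p^m} with c ≠ 0, and j ≥ 1 an integer. For a ∈ 𝔽_{p^n}, b ∈ 𝔽_{p^m}, let n_F(a,b,c) = #{(x,y) ∈ 𝔽_{p^n}×𝔽_{p^n} : F(y) − c·F(x) = b and F(y+a) − c⁻¹·F(x+a) = b}. Then Σ_{a ∈ 𝔽_{p^n}, b ∈ 𝔽_{p^m}} n_F(a,b,c)^j = p^{−(2j−1)(m+n)} · Σ Π_{i=1}^{j} [ 𝒲_F(u_i, z_i) · conj(𝒲_F(c·u_i,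 −w_i)) · 𝒲_F(v_i, −z_i) · conj(𝒲_F(c⁻¹·v_i, w_i)) ], where the outer sum runs over all tuples w_1,…,w_j, z_1,…,z_j ∈ 𝔽_{p^n} and u_1,…,u_j, v_1,…,v_j ∈ 𝔽_{p^m} satisfying Σ_{i=1}^{j}(w_i + z_i) = 0 and Σ_{i=1}^{j}(u_i + v_i) = 0. -/
open scoped Classical

/-- `ζ_p ^ t` for `t : ZMod p`, where `ζ_p = exp(2πi/p)`. -/
noncomputable def zetaPow (p : ℕ) (t : ZMod p) : ℂ :=
  Complex.exp (2 * Real.pi * Complex.I * (t.val : ℂ) / (p : ℂ))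

/-- The Walsh transform `𝒲_F(u,z) = Σ_x ζ_p^{Tr_m(u·F(x)) − Tr_n(z·x)}` of an
`(n,m)`-function `F : Kn → Km` between finite fields of characteristic `p`. -/
noncomputable def walsh (p : ℕ) (Kn Km : Type) [Field Kn] [Fintype Kn] [Field Km]
    [Fintype Km] [Algebra (ZMod p) Kn] [Algebra (ZMod p) Km]
    (F : Kn → Km) (u : Km) (z : Kn) : ℂ :=
  ∑ x : Kn, zetaPow p
    (Algebra.trace (ZMod p) Km (u * F x) - Algebra.trace (ZMod p) Kn (z * x))

/-- The boomerang counting function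
`n_F(a,b,c) = #{(x,y) : F(y) − c·F(x) = b ∧ F(y+a) − c⁻¹·F(x+a) = b}`. -/
noncomputable def nFcount {Kn Km : Type} [Field Kn] [Field Km]
    (F : Kn → Km) (c : Km) (a : Kn) (b : Km) : ℕ :=
  Nat.card {xy : Kn × Kn //
    F xy.2 - c * F xy.1 = b ∧ F (xy.2 + a) - c⁻¹ * F (xy.1 + a) = b}

open Finset

namespace PMproof

/-! ### Generic sum manipulation lemmas -/

section Sums

variable {A B C D E G : Type*} [Fintype A] [Fintype B] [Fintype C] [Fintype D]
  [Fintype E] [Fintype G]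

lemma pull2 (f : A → B → C → ℂ) :
    ∑ x : A, ∑ a : B, ∑ b : C, f x a b = ∑ a : B, ∑ b : C, ∑ x : A, f x a b := by
  rw [Finset.sum_comm]
  exact Finset.sum_congr rfl fun a _ => Finset.sum_comm

lemma swap4 (f : A → B → C → D → ℂ) :
    ∑ x : A, ∑ y : B, ∑ u : C, ∑ v : D, f x y u v
      = ∑ u : C, ∑ v : D, ∑ y : B, ∑ x : A, f x y u v := by
  calc ∑ x : A, ∑ y : B, ∑ u : C, ∑ v : D, f x y u v
      = ∑ x : A, ∑ u : C, ∑ v : D, ∑ y : B, f x y u v :=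
        Finset.sum_congr rfl fun x _ => pull2 _
    _ = ∑ u : C, ∑ v : D, ∑ x : A, ∑ y : B, f x y u v := pull2 _
    _ = ∑ u : C, ∑ v : D, ∑ y : B, ∑ x : A, f x y u v :=
        Finset.sum_congr rfl fun u _ => Finset.sum_congr rfl fun v _ =>
          Finset.sum_comm

lemma pull_ab (f : A → B → C → D → E → G → ℂ) :
    ∑ w : A, ∑ z : B, ∑ u : C, ∑ v : D, ∑ a : E, ∑ b : G, f w z u v a b
      = ∑ a : E, ∑ b : G, ∑ w : A, ∑ z : B, ∑ u : C, ∑ v : D, f w z u v a b := by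
  calc ∑ w : A, ∑ z : B, ∑ u : C, ∑ v : D, ∑ a : E, ∑ b : G, f w z u v a b
      = ∑ w : A, ∑ z : B, ∑ u : C, ∑ a : E, ∑ b : G, ∑ v : D, f w z u v a b :=
        Finset.sum_congr rfl fun w _ => Finset.sum_congr rfl fun z _ =>
          Finset.sum_congr rfl fun u _ => pull2 _
    _ = ∑ w : A, ∑ z : B, ∑ a : E, ∑ b : G, ∑ u : C, ∑ v : D, f w z u v a b :=
        Finset.sum_congr rfl fun w _ => Finset.sum_congr rfl fun z _ => pull2 _
    _ = ∑ w : A, ∑ a : E, ∑ b : G, ∑ z : B, ∑ u : C, ∑ v : D, f w z u v a b :=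
        Finset.sum_congr rfl fun w _ => pull2 _
    _ = ∑ a : E, ∑ b : G, ∑ w : A, ∑ z : B, ∑ u : C, ∑ v : D, f w z u v a b := pull2 _

lemma pull_c2 (c : ℂ) (f : A → B → ℂ) :
    ∑ a : A, ∑ b : B, c * f a b = c * ∑ a : A, ∑ b : B, f a b := by
  simp only [← Finset.mul_sum]

lemma pull_c4 (c : ℂ) (f : A → B → C → D → ℂ) :
    ∑ a : A, ∑ b : B, ∑ x : C, ∑ y : D, c * f a b x y
      = c * ∑ a : A, ∑ b : B, ∑ x : C, ∑ y : D, f a b x y := by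
  simp only [← Finset.mul_sum]

lemma sum4fn {A B : Type*} [Fintype A] [Fintype B] (j : ℕ) (G : A → A → B → B → ℂ) :
    ∑ w : Fin j → A, ∑ z : Fin j → A, ∑ u : Fin j → B, ∑ v : Fin j → B,
        ∏ i : Fin j, G (w i) (z i) (u i) (v i)
      = (∑ w : A, ∑ z : A, ∑ u : B, ∑ v : B, G w z u v) ^ j := by
  calc ∑ w : Fin j → A, ∑ z : Fin j → A, ∑ u : Fin j → B, ∑ v : Fin j → B,
        ∏ i : Fin j, G (w i) (z i) (u i) (v i)
      = ∑ w : Fin j → A, ∑ z : Fin j → A, ∑ u : Fin j → B,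
          ∏ i : Fin j, ∑ v : B, G (w i) (z i) (u i) v :=
        Finset.sum_congr rfl fun w _ => Finset.sum_congr rfl fun z _ =>
          Finset.sum_congr rfl fun u _ =>
            (Fintype.prod_sum fun i t => G (w i) (z i) (u i) t).symm
    _ = ∑ w : Fin j → A, ∑ z : Fin j → A,
          ∏ i : Fin j, ∑ u : B, ∑ v : B, G (w i) (z i) u v :=
        Finset.sum_congr rfl fun w _ => Finset.sum_congr rfl fun z _ =>
          (Fintype.prod_sum fun i t => ∑ v : B, G (w i) (z i) t v).symm
    _ = ∑ w : Fin j → A,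
          ∏ i : Fin j, ∑ z : A, ∑ u : B, ∑ v : B, G (w i) z u v :=
        Finset.sum_congr rfl fun w _ =>
          (Fintype.prod_sum fun i t => ∑ u : B, ∑ v : B, G (w i) t u v).symm
    _ = ∏ i : Fin j, ∑ w : A, ∑ z : A, ∑ u : B, ∑ v : B, G w z u v :=
        (Fintype.prod_sum fun i t => ∑ z : A, ∑ u : B, ∑ v : B, G t z u v).symm
    _ = (∑ w : A, ∑ z : A, ∑ u : B, ∑ v : B, G w z u v) ^ j := by
        rw [Finset.prod_const, Finset.card_univ, Fintype.card_fin]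

lemma mul_sum_sum {A B : Type*} [Fintype A] [Fintype B] (c : ℂ) (f : A → ℂ) (g : B → ℂ) :
    c * (∑ z : A, f z) * (∑ w : B, g w) = ∑ z : A, ∑ w : B, c * f z * g w := by
  rw [mul_assoc, Finset.sum_mul_sum, Finset.mul_sum]
  exact Finset.sum_congr rfl fun z _ => by
    rw [Finset.mul_sum]
    exact Finset.sum_congr rfl fun w _ => by ring

end Sums

/-! ### Additive characters -/

section Char

variable (p : ℕ) [hp : Fact p.Prime]

instance : NeZero p := ⟨hp.out.ne_zero⟩

noncomputable def eChar : AddChar (ZMod p) ℂ :=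
  AddChar.zmodChar p ((Complex.isPrimitiveRoot_exp p hp.out.ne_zero).pow_eq_one)

lemma eChar_apply (t : ZMod p) : eChar p t = zetaPow p t := by
  rw [eChar, AddChar.zmodChar_apply, ← Complex.exp_nat_mul, zetaPow]
  congr 1
  ring

lemma eChar_primitive : (eChar p).IsPrimitive :=
  AddChar.zmodChar_primitive_of_primitive_root p (Complex.isPrimitiveRoot_exp p hp.out.ne_zero)

variable (K : Type) [Field K] [Fintype K] [Algebra (ZMod p) K]

noncomputable def chi : AddChar K ℂ :=
  (eChar p).compAddMonoidHom (Algebra.trace (ZMod p) K).toAddMonoidHom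

lemma chi_apply (t : K) : chi p K t = zetaPow p (Algebra.trace (ZMod p) K t) := by
  simp [chi, eChar_apply]

lemma chi_ne_one : chi p K ≠ 1 := by
  intro h
  obtain ⟨x, hx⟩ := Algebra.trace_surjective (ZMod p) K 1
  have h1 : chi p K x = 1 := by rw [h]; rfl
  rw [chi, AddChar.compAddMonoidHom_apply] at h1
  have hx' : (Algebra.trace (ZMod p) K).toAddMonoidHom x = 1 := hx
  rw [hx', eChar_apply] at h1
  have hroot := Complex.isPrimitiveRoot_exp p hp.out.ne_zero
  refine hroot.ne_one hp.out.one_lt ?_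
  haveI : Fact (1 < p) := ⟨hp.out.one_lt⟩
  rw [← h1, zetaPow, ZMod.val_one]
  norm_num

lemma chi_primitive : (chi p K).IsPrimitive :=
  AddChar.IsPrimitive.of_ne_one (chi_ne_one p K)

lemma sum_chi (t : K) :
    ∑ x : K, chi p K (x * t) = if t = 0 then (Fintype.card K : ℂ) else 0 := by
  rw [AddChar.sum_mulShift t (chi_primitive p K)]
  split_ifs <;> simp

lemma sum_chi' (t : K) :
    ∑ x : K, chi p K (t * x) = if t = 0 then (Fintype.card K : ℂ) else 0 := by
  simp_rw [mul_comm t]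
  exact sum_chi p K t

lemma chi_conj (t : K) : (starRingEnd ℂ) (chi p K t) = chi p K (-t) := by
  have h : 0 < ringChar K := Nat.pos_of_ne_zero (CharP.ringChar_ne_zero_of_finite K)
  rw [AddChar.starComp_apply h, AddChar.inv_apply]

lemma chi_sum {ι : Type*} (s : Finset ι) (f : ι → K) :
    chi p K (∑ i ∈ s, f i) = ∏ i ∈ s, chi p K (f i) := by
  induction s using Finset.cons_induction with
  | empty => simp
  | cons a s ha ih => rw [Finset.sum_cons, Finset.prod_cons, AddChar.map_add_eq_mul, ih]

end Char

/-! ### Main lemmas -/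

section Main

variable (p : ℕ) [hp : Fact p.Prime] (Kn Km : Type) [Field Kn] [Fintype Kn] [Field Km]
  [Fintype Km] [Algebra (ZMod p) Kn] [Algebra (ZMod p) Km] (F : Kn → Km) (c : Km)

noncomputable def Kern (a : Kn) (b : Km) (x y : Kn) (u v : Km) : ℂ :=
  chi p Km (u * (F y - c * F x - b)) * chi p Km (v * (F (y + a) - c⁻¹ * F (x + a) - b))

noncomputable def Sab (a : Kn) (b : Km) : ℂ :=
  ∑ u : Km, ∑ v : Km, ∑ y : Kn, ∑ x : Kn, Kern p Kn Km F c a b x y u v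

lemma walsh_eq (u : Km) (z : Kn) :
    walsh p Kn Km F u z = ∑ x : Kn, chi p Km (u * F x) * chi p Kn (-(z * x)) := by
  refine Finset.sum_congr rfl fun x _ => ?_
  rw [chi_apply, chi_apply, map_neg, ← eChar_apply, ← eChar_apply, ← eChar_apply,
    ← AddChar.map_add_eq_mul, ← sub_eq_add_neg]

lemma walsh_conj (u : Km) (z : Kn) :
    (starRingEnd ℂ) (walsh p Kn Km F u z)
      = ∑ x : Kn, chi p Km (-(u * F x)) * chi p Kn (z * x) := by
  rw [walsh_eq, map_sum]
  refine Finset.sum_congr rfl fun x _ => ?_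
  rw [map_mul, chi_conj, chi_conj, neg_neg]

lemma collapse (a : Kn) (f g : Kn → ℂ) :
    ∑ z : Kn, chi p Kn (-(z * a)) * (∑ x : Kn, f x * chi p Kn (-(z * x)))
        * (∑ y : Kn, g y * chi p Kn (z * y))
      = (Fintype.card Kn : ℂ) * ∑ x : Kn, f x * g (x + a) := by
  calc ∑ z : Kn, chi p Kn (-(z * a)) * (∑ x : Kn, f x * chi p Kn (-(z * x)))
        * (∑ y : Kn, g y * chi p Kn (z * y))
      = ∑ z : Kn, ∑ x : Kn, ∑ y : Kn, f x * g y * chi p Kn (z * (y - x - a)) := by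
        refine Finset.sum_congr rfl fun z _ => ?_
        rw [mul_sum_sum]
        refine Finset.sum_congr rfl fun x _ => Finset.sum_congr rfl fun y _ => ?_
        have harg : z * (y - x - a) = -(z * a) + -(z * x) + z * y := by ring
        rw [harg, AddChar.map_add_eq_mul, AddChar.map_add_eq_mul]
        ring
    _ = ∑ x : Kn, ∑ y : Kn, ∑ z : Kn, f x * g y * chi p Kn (z * (y - x - a)) := pull2 _
    _ = ∑ x : Kn, ∑ y : Kn,
          if y = x + a then f x * g y * (Fintype.card Kn : ℂ) else 0 := by
        refine Finset.sum_congr rfl fun x _ => Finset.sum_congr rfl fun y _ => ?_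
        rw [← Finset.mul_sum, sum_chi]
        have hcond : (y - x - a = 0) = (y = x + a) := by
          rw [sub_sub, sub_eq_zero]
        rw [hcond]
        by_cases h : y = x + a <;> simp [h]
    _ = ∑ x : Kn, f x * g (x + a) * (Fintype.card Kn : ℂ) := by
        refine Finset.sum_congr rfl fun x _ => ?_
        rw [Finset.sum_ite_eq' Finset.univ (x + a)
          (fun y => f x * g y * (Fintype.card Kn : ℂ))]
        simp
    _ = (Fintype.card Kn : ℂ) * ∑ x : Kn, f x * g (x + a) := by
        rw [← Finset.sum_mul, mul_comm]

lemma lemB (a : Kn) (b : Km) :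
    ∑ w : Kn, ∑ z : Kn, ∑ u : Km, ∑ v : Km,
        chi p Kn (-(w + z) * a) * chi p Km (-(u + v) * b) *
          (walsh p Kn Km F u z * (starRingEnd ℂ) (walsh p Kn Km F (c * u) (-w)) *
            walsh p Kn Km F v (-z) * (starRingEnd ℂ) (walsh p Kn Km F (c⁻¹ * v) w))
      = (Fintype.card Kn : ℂ) * (Fintype.card Kn : ℂ) * Sab p Kn Km F c a b := by
  rw [swap4]
  have huv : ∀ (u v : Km),
      (∑ z : Kn, ∑ w : Kn,
        chi p Kn (-(w + z) * a) * chi p Km (-(u + v) * b) *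
          (walsh p Kn Km F u z * (starRingEnd ℂ) (walsh p Kn Km F (c * u) (-w)) *
            walsh p Kn Km F v (-z) * (starRingEnd ℂ) (walsh p Kn Km F (c⁻¹ * v) w)))
      = chi p Km (-(u + v) * b)
        * ((Fintype.card Kn : ℂ) * ∑ x : Kn, chi p Km (u * F x) * chi p Km (v * F (x + a)))
        * ((Fintype.card Kn : ℂ) * ∑ x : Kn,
            chi p Km (-(c * u * F x)) * chi p Km (-(c⁻¹ * v * F (x + a)))) := by
    intro u v
    rw [← collapse p Kn a (fun x => chi p Km (u * F x)) (fun y => chi p Km (v * F y)),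
      ← collapse p Kn a (fun x => chi p Km (-(c * u * F x)))
        (fun y => chi p Km (-(c⁻¹ * v * F y)))]
    rw [mul_sum_sum]
    refine Finset.sum_congr rfl fun z _ => Finset.sum_congr rfl fun w _ => ?_
    rw [walsh_conj, walsh_conj, walsh_eq, walsh_eq]
    have hsplit : chi p Kn (-(w + z) * a) = chi p Kn (-(z * a)) * chi p Kn (-(w * a)) := by
      rw [← AddChar.map_add_eq_mul]
      congr 1
      ring
    rw [hsplit]
    have h1 : ∀ y : Kn, -(-z * y) = z * y := fun y => by ring
    have h2 : ∀ x : Kn, (-w) * x = -(w * x) := fun x => by ring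
    simp only [h1, h2]
    ring
  calc ∑ u : Km, ∑ v : Km, ∑ z : Kn, ∑ w : Kn,
        chi p Kn (-(w + z) * a) * chi p Km (-(u + v) * b) *
          (walsh p Kn Km F u z * (starRingEnd ℂ) (walsh p Kn Km F (c * u) (-w)) *
            walsh p Kn Km F v (-z) * (starRingEnd ℂ) (walsh p Kn Km F (c⁻¹ * v) w))
      = ∑ u : Km, ∑ v : Km,
          (Fintype.card Kn : ℂ) * (Fintype.card Kn : ℂ) *
            (∑ y : Kn, ∑ x : Kn, Kern p Kn Km F c a b x y u v) := by
        refine Finset.sum_congr rfl fun u _ => Finset.sum_congr rfl fun v _ => ?_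
        rw [huv u v]
        have hexp : chi p Km (-(u + v) * b)
            * ((Fintype.card Kn : ℂ) * ∑ x : Kn, chi p Km (u * F x) * chi p Km (v * F (x + a)))
            * ((Fintype.card Kn : ℂ) * ∑ x : Kn,
                chi p Km (-(c * u * F x)) * chi p Km (-(c⁻¹ * v * F (x + a))))
            = (Fintype.card Kn : ℂ) * (Fintype.card Kn : ℂ) *
              (chi p Km (-(u + v) * b)
                * (∑ y : Kn, chi p Km (u * F y) * chi p Km (v * F (y + a)))
                * (∑ x : Kn, chi p Km (-(c * u * F x)) * chi p Km (-(c⁻¹ * v * F (x + a))))) := by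
          ring
        rw [hexp]
        congr 1
        rw [mul_sum_sum]
        refine Finset.sum_congr rfl fun y _ => Finset.sum_congr rfl fun x _ => ?_
        simp only [Kern]
        simp only [← AddChar.map_add_eq_mul]
        congr 1
        ring
    _ = (Fintype.card Kn : ℂ) * (Fintype.card Kn : ℂ) * Sab p Kn Km F c a b := by
        rw [pull_c2, Sab]

lemma ite_eq_sum_chi (Q : Prop) (t : Km) (hQ : Q ↔ t = 0) :
    (if Q then (1 : ℂ) else 0) = (Fintype.card Km : ℂ)⁻¹ * ∑ u : Km, chi p Km (u * t) := by
  rw [sum_chi]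
  have hM : (Fintype.card Km : ℂ) ≠ 0 := Nat.cast_ne_zero.mpr Fintype.card_ne_zero
  by_cases h : Q
  · simp [h, hQ.mp h, inv_mul_cancel₀ hM]
  · have ht : ¬ t = 0 := fun ht => h (hQ.mpr ht)
    simp [h, ht]

lemma nF_eq (a : Kn) (b : Km) :
    (nFcount F c a b : ℂ)
      = (Fintype.card Km : ℂ)⁻¹ * (Fintype.card Km : ℂ)⁻¹ * Sab p Kn Km F c a b := by
  have h1 : (nFcount F c a b : ℂ)
      = ∑ x : Kn, ∑ y : Kn,
          (if F y - c * F x = b then (1 : ℂ) else 0)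
            * (if F (y + a) - c⁻¹ * F (x + a) = b then (1 : ℂ) else 0) := by
    rw [nFcount, Nat.card_eq_fintype_card, Fintype.card_subtype,
      Finset.natCast_card_filter, Fintype.sum_prod_type]
    refine Finset.sum_congr rfl fun x _ => Finset.sum_congr rfl fun y _ => ?_
    by_cases hA : F y - c * F x = b <;> by_cases hB : F (y + a) - c⁻¹ * F (x + a) = b <;>
      simp [hA, hB]
  rw [h1]
  calc ∑ x : Kn, ∑ y : Kn,
        (if F y - c * F x = b then (1 : ℂ) else 0)
          * (if F (y + a) - c⁻¹ * F (x + a) = b then (1 : ℂ) else 0)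
      = ∑ x : Kn, ∑ y : Kn,
          (Fintype.card Km : ℂ)⁻¹ * (Fintype.card Km : ℂ)⁻¹ *
            (∑ u : Km, ∑ v : Km, Kern p Kn Km F c a b x y u v) := by
        refine Finset.sum_congr rfl fun x _ => Finset.sum_congr rfl fun y _ => ?_
        rw [ite_eq_sum_chi p Km (F y - c * F x = b) (F y - c * F x - b) sub_eq_zero.symm,
          ite_eq_sum_chi p Km (F (y + a) - c⁻¹ * F (x + a) = b)
            (F (y + a) - c⁻¹ * F (x + a) - b) sub_eq_zero.symm]
        have hrw : ((Fintype.card Km : ℂ)⁻¹ * ∑ u : Km, chi p Km (u * (F y - c * F x - b)))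
            * ((Fintype.card Km : ℂ)⁻¹ *
                ∑ v : Km, chi p Km (v * (F (y + a) - c⁻¹ * F (x + a) - b)))
            = (Fintype.card Km : ℂ)⁻¹ * (Fintype.card Km : ℂ)⁻¹ *
              ((∑ u : Km, chi p Km (u * (F y - c * F x - b)))
                * ∑ v : Km, chi p Km (v * (F (y + a) - c⁻¹ * F (x + a) - b))) := by
          ring
        rw [hrw, Finset.sum_mul_sum]
        rfl
    _ = (Fintype.card Km : ℂ)⁻¹ * (Fintype.card Km : ℂ)⁻¹ *
          ∑ x : Kn, ∑ y : Kn, ∑ u : Km, ∑ v : Km, Kern p Kn Km F c a b x y u v := by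
        rw [pull_c2]
    _ = (Fintype.card Km : ℂ)⁻¹ * (Fintype.card Km : ℂ)⁻¹ * Sab p Kn Km F c a b := by
        rw [swap4, Sab]

lemma ite2char (j : ℕ) (w z : Fin j → Kn) (u v : Fin j → Km) (X : Fin j → ℂ) :
    (if (∑ i : Fin j, (w i + z i) = 0 ∧ ∑ i : Fin j, (u i + v i) = 0)
      then ∏ i : Fin j, X i else 0)
    = ((Fintype.card Kn : ℂ)⁻¹ * (Fintype.card Km : ℂ)⁻¹) *
        ∑ a : Kn, ∑ b : Km, ∏ i : Fin j,
          (chi p Kn (-(w i + z i) * a) * chi p Km (-(u i + v i) * b) * X i) := by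
  have hsplit : ∀ (a : Kn) (b : Km),
      ∏ i : Fin j, (chi p Kn (-(w i + z i) * a) * chi p Km (-(u i + v i) * b) * X i)
        = chi p Kn (-(∑ i : Fin j, (w i + z i)) * a)
            * chi p Km (-(∑ i : Fin j, (u i + v i)) * b) * ∏ i : Fin j, X i := by
    intro a b
    rw [Finset.prod_mul_distrib, Finset.prod_mul_distrib, ← chi_sum, ← chi_sum]
    congr 2
    · simp only [neg_mul]
      rw [Finset.sum_neg_distrib, ← Finset.sum_mul]
    · simp only [neg_mul]
      rw [Finset.sum_neg_distrib, ← Finset.sum_mul]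
  simp only [hsplit]
  have hfact : ∑ a : Kn, ∑ b : Km,
      chi p Kn (-(∑ i : Fin j, (w i + z i)) * a)
        * chi p Km (-(∑ i : Fin j, (u i + v i)) * b) * ∏ i : Fin j, X i
      = (∑ a : Kn, chi p Kn (-(∑ i : Fin j, (w i + z i)) * a))
        * ((∑ b : Km, chi p Km (-(∑ i : Fin j, (u i + v i)) * b)) * ∏ i : Fin j, X i) := by
    rw [Finset.sum_mul]
    refine Finset.sum_congr rfl fun a _ => ?_
    rw [Finset.sum_mul, Finset.mul_sum]
    refine Finset.sum_congr rfl fun b _ => ?_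
    ring
  rw [hfact, sum_chi', sum_chi', neg_eq_zero, neg_eq_zero]
  have hN : (Fintype.card Kn : ℂ) ≠ 0 := Nat.cast_ne_zero.mpr Fintype.card_ne_zero
  have hM : (Fintype.card Km : ℂ) ≠ 0 := Nat.cast_ne_zero.mpr Fintype.card_ne_zero
  by_cases h1 : ∑ i : Fin j, (w i + z i) = 0 <;>
    by_cases h2 : ∑ i : Fin j, (u i + v i) = 0 <;>
      simp [h1, h2]
  have hP : (Fintype.card Kn : ℂ)⁻¹ * (Fintype.card Km : ℂ)⁻¹ *
        ((Fintype.card Kn : ℂ) * ((Fintype.card Km : ℂ) * ∏ i : Fin j, X i))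
      = ((Fintype.card Kn : ℂ)⁻¹ * (Fintype.card Kn : ℂ)) *
          (((Fintype.card Km : ℂ)⁻¹ * (Fintype.card Km : ℂ)) * ∏ i : Fin j, X i) := by ring
  rw [hP, inv_mul_cancel₀ hN, inv_mul_cancel₀ hM, one_mul, one_mul]

end Main

end PMproof

/-- the power moments of the boomerang counting function `n_F(·,·,c)` are
expressed via products of Walsh transform values. -/
theorem power_moment_nF_eq_walsh_sum (p n m : ℕ) (hp : p.Prime) (hn : 0 < n) (hm : 0 < m)
    (Kn Km : Type) [Field Kn] [Fintype Kn] [Field Km] [Fintype Km]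
    [Algebra (ZMod p) Kn] [Algebra (ZMod p) Km]
    (hKn : Fintype.card Kn = p ^ n) (hKm : Fintype.card Km = p ^ m)
    (F : Kn → Km) (c : Km) (hc : c ≠ 0) (j : ℕ) (hj : 1 ≤ j) :
    ∑ a : Kn, ∑ b : Km, (nFcount F c a b : ℂ) ^ j =
      ((p : ℂ) ^ ((2 * j - 1) * (m + n)))⁻¹ *
        ∑ w : Fin j → Kn, ∑ z : Fin j → Kn, ∑ u : Fin j → Km, ∑ v : Fin j → Km,
          if (∑ i : Fin j, (w i + z i) = 0 ∧ ∑ i : Fin j, (u i + v i) = 0) then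
            ∏ i : Fin j,
              (walsh p Kn Km F (u i) (z i) *
                (starRingEnd ℂ) (walsh p Kn Km F (c * u i) (-(w i))) *
                walsh p Kn Km F (v i) (-(z i)) *
                (starRingEnd ℂ) (walsh p Kn Km F (c⁻¹ * v i) (w i)))
          else 0 := by
  haveI : Fact p.Prime := ⟨hp⟩
  classical
  set N : ℂ := (Fintype.card Kn : ℂ) with hNdef
  set M : ℂ := (Fintype.card Km : ℂ) with hMdef
  have hN : N = (p : ℂ) ^ n := by rw [hNdef, hKn]; push_cast; ring
  have hM : M = (p : ℂ) ^ m := by rw [hMdef, hKm]; push_cast; ring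
  have hp0 : (p : ℂ) ≠ 0 := Nat.cast_ne_zero.mpr hp.ne_zero
  have hN0 : N ≠ 0 := by rw [hN]; exact pow_ne_zero _ hp0
  have hM0 : M ≠ 0 := by rw [hM]; exact pow_ne_zero _ hp0
  -- left-hand side
  have hLHS : ∑ a : Kn, ∑ b : Km, (nFcount F c a b : ℂ) ^ j
      = (M⁻¹ * M⁻¹) ^ j * ∑ a : Kn, ∑ b : Km, (PMproof.Sab p Kn Km F c a b) ^ j := by
    rw [← PMproof.pull_c2]
    refine Finset.sum_congr rfl fun a _ => Finset.sum_congr rfl fun b _ => ?_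
    rw [PMproof.nF_eq p Kn Km F c a b, mul_pow]
  -- right-hand side inner sum
  have hRHS : ∑ w : Fin j → Kn, ∑ z : Fin j → Kn, ∑ u : Fin j → Km, ∑ v : Fin j → Km,
        (if (∑ i : Fin j, (w i + z i) = 0 ∧ ∑ i : Fin j, (u i + v i) = 0) then
          ∏ i : Fin j,
            (walsh p Kn Km F (u i) (z i) *
              (starRingEnd ℂ) (walsh p Kn Km F (c * u i) (-(w i))) *
              walsh p Kn Km F (v i) (-(z i)) *
              (starRingEnd ℂ) (walsh p Kn Km F (c⁻¹ * v i) (w i)))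
        else 0)
      = (N⁻¹ * M⁻¹) * ((N * N) ^ j *
          ∑ a : Kn, ∑ b : Km, (PMproof.Sab p Kn Km F c a b) ^ j) := by
    calc ∑ w : Fin j → Kn, ∑ z : Fin j → Kn, ∑ u : Fin j → Km, ∑ v : Fin j → Km,
          (if (∑ i : Fin j, (w i + z i) = 0 ∧ ∑ i : Fin j, (u i + v i) = 0) then
            ∏ i : Fin j,
              (walsh p Kn Km F (u i) (z i) *
                (starRingEnd ℂ) (walsh p Kn Km F (c * u i) (-(w i))) *
                walsh p Kn Km F (v i) (-(z i)) *
                (starRingEnd ℂ) (walsh p Kn Km F (c⁻¹ * v i) (w i)))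
          else 0)
        = ∑ w : Fin j → Kn, ∑ z : Fin j → Kn, ∑ u : Fin j → Km, ∑ v : Fin j → Km,
            (N⁻¹ * M⁻¹) *
              ∑ a : Kn, ∑ b : Km, ∏ i : Fin j,
                (PMproof.chi p Kn (-(w i + z i) * a) * PMproof.chi p Km (-(u i + v i) * b) *
                  (walsh p Kn Km F (u i) (z i) *
                    (starRingEnd ℂ) (walsh p Kn Km F (c * u i) (-(w i))) *
                    walsh p Kn Km F (v i) (-(z i)) *
                    (starRingEnd ℂ) (walsh p Kn Km F (c⁻¹ * v i) (w i)))) := by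
          refine Finset.sum_congr rfl fun w _ => Finset.sum_congr rfl fun z _ =>
            Finset.sum_congr rfl fun u _ => Finset.sum_congr rfl fun v _ => ?_
          exact PMproof.ite2char p Kn Km j w z u v _
      _ = (N⁻¹ * M⁻¹) * ∑ w : Fin j → Kn, ∑ z : Fin j → Kn, ∑ u : Fin j → Km,
            ∑ v : Fin j → Km, ∑ a : Kn, ∑ b : Km, ∏ i : Fin j,
              (PMproof.chi p Kn (-(w i + z i) * a) * PMproof.chi p Km (-(u i + v i) * b) *
                (walsh p Kn Km F (u i) (z i) *
                  (starRingEnd ℂ) (walsh p Kn Km F (c * u i) (-(w i))) *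
                  walsh p Kn Km F (v i) (-(z i)) *
                  (starRingEnd ℂ) (walsh p Kn Km F (c⁻¹ * v i) (w i)))) := by
          rw [PMproof.pull_c4]
      _ = (N⁻¹ * M⁻¹) * ∑ a : Kn, ∑ b : Km, ∑ w : Fin j → Kn, ∑ z : Fin j → Kn,
            ∑ u : Fin j → Km, ∑ v : Fin j → Km, ∏ i : Fin j,
              (PMproof.chi p Kn (-(w i + z i) * a) * PMproof.chi p Km (-(u i + v i) * b) *
                (walsh p Kn Km F (u i) (z i) *
                  (starRingEnd ℂ) (walsh p Kn Km F (c * u i) (-(w i))) *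
                  walsh p Kn Km F (v i) (-(z i)) *
                  (starRingEnd ℂ) (walsh p Kn Km F (c⁻¹ * v i) (w i)))) := by
          rw [PMproof.pull_ab]
      _ = (N⁻¹ * M⁻¹) * ∑ a : Kn, ∑ b : Km,
            ((N * N) * PMproof.Sab p Kn Km F c a b) ^ j := by
          congr 1
          refine Finset.sum_congr rfl fun a _ => Finset.sum_congr rfl fun b _ => ?_
          rw [PMproof.sum4fn j (fun w z u v =>
            PMproof.chi p Kn (-(w + z) * a) * PMproof.chi p Km (-(u + v) * b) *
              (walsh p Kn Km F u z * (starRingEnd ℂ) (walsh p Kn Km F (c * u) (-w)) *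
                walsh p Kn Km F v (-z) * (starRingEnd ℂ) (walsh p Kn Km F (c⁻¹ * v) w)))]
          rw [PMproof.lemB p Kn Km F c a b]
      _ = (N⁻¹ * M⁻¹) * ((N * N) ^ j *
            ∑ a : Kn, ∑ b : Km, (PMproof.Sab p Kn Km F c a b) ^ j) := by
          congr 1
          rw [← PMproof.pull_c2]
          refine Finset.sum_congr rfl fun a _ => Finset.sum_congr rfl fun b _ => ?_
          rw [mul_pow]
  rw [hLHS, hRHS]
  have hcoef : (M⁻¹ * M⁻¹) ^ j
      = ((p : ℂ) ^ ((2 * j - 1) * (m + n)))⁻¹ * ((N⁻¹ * M⁻¹) * (N * N) ^ j) := by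
    have h2j : 2 * j - 1 + 1 = 2 * j := by omega
    rw [hN, hM]
    have ha : (((p:ℂ)^m)⁻¹ * ((p:ℂ)^m)⁻¹ : ℂ) = ((p:ℂ)^(m+m))⁻¹ := by rw [← mul_inv, ← pow_add]
    have hb : (((p:ℂ)^n)⁻¹ * ((p:ℂ)^m)⁻¹ : ℂ) = ((p:ℂ)^(n+m))⁻¹ := by rw [← mul_inv, ← pow_add]
    rw [ha, hb, inv_pow, ← pow_mul]
    rw [← pow_add, ← pow_mul, ← mul_assoc, ← mul_inv, ← pow_add]
    have hE : (2 * j - 1) * (m + n) + (n + m) = (m + m) * j + (n + n) * j := by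
      have e1 : (2 * j - 1) * (m + n) + (n + m) = (2 * j - 1 + 1) * (m + n) := by ring
      rw [e1, h2j]; ring
    rw [hE, pow_add, mul_inv, mul_assoc, inv_mul_cancel₀ (pow_ne_zero _ hp0), mul_one]
  rw [hcoef]
  ring
end

section
/- Let k and n be positive integers with k ≤ n. Then gcd(2^k + 1, 2^n − 1) = (2^{gcd(2k,n)} − 1) / (2^{gcd(k,n)} − 1). In particular, if n is odd, or if n ≡ 2 (mod 4) and k is even, then gcd(2^k + 1, 2^n − 1) = 1. -/
/-!
As `2^k + 1` is odd, it is coprime to `2^k - 1`, hence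
`gcd(2^k + 1, 2^n - 1) · gcd(2^k - 1, 2^n - 1) = gcd(2^(2k) - 1, 2^n - 1)`, and the gcd formula
`gcd(2^a - 1, 2^b - 1) = 2^gcd(a, b) - 1` turns this into
`gcd(2^k + 1, 2^n - 1) · (2^gcd(k, n) - 1) = 2^gcd(2k, n) - 1`.
In both special cases `gcd(2k, n) = gcd(k, n)`.
-/

theorem Nat.coprime_add_one_sub_one_of_even {x : ℕ} (hx : Even x) :
    Nat.Coprime (x + 1) (x - 1) := by
  rcases Nat.eq_zero_or_pos x with rfl | hx0
  · simp
  have hodd : Odd (x - 1) := Nat.Even.sub_odd hx0 hx odd_one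
  rw [show x + 1 = 2 + (x - 1) by omega, Nat.coprime_add_self_left]
  exact Nat.coprime_two_left.mpr hodd

theorem Nat.pow_add_one_mul_pow_sub_one (a k : ℕ) :
    (a ^ k + 1) * (a ^ k - 1) = a ^ (2 * k) - 1 := by
  rw [← Nat.sq_sub_sq, one_pow, ← pow_mul, mul_comm]

theorem Nat.gcd_pow_add_one_pow_sub_one_mul {a : ℕ} (ha : Even a) {k : ℕ} (hk : k ≠ 0) (n : ℕ) :
    Nat.gcd (a ^ k + 1) (a ^ n - 1) * (a ^ Nat.gcd k n - 1) = a ^ Nat.gcd (2 * k) n - 1 := by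
  have hcop := Nat.coprime_add_one_sub_one_of_even (ha.pow_of_ne_zero hk)
  calc Nat.gcd (a ^ k + 1) (a ^ n - 1) * (a ^ Nat.gcd k n - 1)
      = Nat.gcd (a ^ n - 1) (a ^ k + 1) * Nat.gcd (a ^ n - 1) (a ^ k - 1) := by
        rw [← Nat.pow_sub_one_gcd_pow_sub_one, Nat.gcd_comm, Nat.gcd_comm (a ^ k - 1)]
    _ = Nat.gcd (a ^ n - 1) ((a ^ k + 1) * (a ^ k - 1)) := (hcop.gcd_mul _).symm
    _ = a ^ Nat.gcd (2 * k) n - 1 := by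
        rw [Nat.pow_add_one_mul_pow_sub_one, Nat.gcd_comm, Nat.pow_sub_one_gcd_pow_sub_one]

theorem Nat.gcd_two_mul_left_of_odd (k : ℕ) {n : ℕ} (hn : Odd n) :
    Nat.gcd (2 * k) n = Nat.gcd k n :=
  Nat.Coprime.gcd_mul_left_cancel k (Nat.coprime_two_left.mpr hn)

theorem Nat.gcd_two_mul_left_of_mod_four_eq_two {k n : ℕ} (hn : n % 4 = 2) (hk : Even k) :
    Nat.gcd (2 * k) n = Nat.gcd k n := by
  obtain ⟨j, rfl⟩ := hk
  obtain ⟨m, rfl⟩ : ∃ m, n = 2 * m := ⟨n / 2, by omega⟩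
  have hm : Odd m := Nat.odd_iff.mpr (by omega)
  rw [← two_mul, Nat.gcd_mul_left, Nat.gcd_mul_left, Nat.gcd_two_mul_left_of_odd j hm]

theorem gcd_two_pow_add_one_general (k n : ℕ) (hk : 0 < k) :
    Nat.gcd (2 ^ k + 1) (2 ^ n - 1) =
      (2 ^ Nat.gcd (2 * k) n - 1) / (2 ^ Nat.gcd k n - 1) ∧
    ((Odd n ∨ (n % 4 = 2 ∧ Even k)) → Nat.gcd (2 ^ k + 1) (2 ^ n - 1) = 1) := by
  have hpos : 0 < 2 ^ Nat.gcd k n - 1 :=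
    Nat.sub_pos_of_lt (Nat.one_lt_two_pow (Nat.gcd_pos_of_pos_left n hk).ne')
  have hgcd : Nat.gcd (2 ^ k + 1) (2 ^ n - 1) =
      (2 ^ Nat.gcd (2 * k) n - 1) / (2 ^ Nat.gcd k n - 1) :=
    (Nat.div_eq_of_eq_mul_left hpos
      (Nat.gcd_pow_add_one_pow_sub_one_mul even_two hk.ne' n).symm).symm
  refine ⟨hgcd, fun h => ?_⟩
  have hg : Nat.gcd (2 * k) n = Nat.gcd k n := by
    rcases h with hn | ⟨hn, hk2⟩
    · exact Nat.gcd_two_mul_left_of_odd k hn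
    · exact Nat.gcd_two_mul_left_of_mod_four_eq_two hn hk2
  rw [hgcd, hg, Nat.div_self hpos]

/-- `gcd(2^k+1, 2^n−1) = (2^{gcd(2k,n)}−1)/(2^{gcd(k,n)}−1)`; in
particular, if `n` is odd, or `n ≡ 2 (mod 4)` and `k` is even, then the gcd is `1`. -/
theorem gcd_two_pow_add_one (k n : ℕ) (hk : 0 < k) (hkn : k ≤ n) :
    Nat.gcd (2 ^ k + 1) (2 ^ n - 1) =
      (2 ^ Nat.gcd (2 * k) n - 1) / (2 ^ Nat.gcd k n - 1) ∧
    ((Odd n ∨ (n % 4 = 2 ∧ Even k)) → Nat.gcd (2 ^ k + 1) (2 ^ n - 1) = 1) :=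
  gcd_two_pow_add_one_general k n hk
end

section
/- Let p be an odd prime, n a positive integer, c ∈ 𝔽_{p^n} with c ≠ 0 and c ≠ 1, and F: 𝔽_{p^n} → 𝔽_{p^n} given by F(x) = x². Then for all a, b ∈ 𝔽_{p^n} with a ≠ 0 and b ≠ 0, the c-BCT entry satisfies _cB_F(a,b) ≤ 4; in particular the c-boomerang uniformity of F satisfies β_{F,c} ≤ 4. -/
open Polynomial

/-- for `p` odd, `F(x) = x²` on `𝔽_{p^n}` and `c ≠ 0,1`, every `c`-BCT
entry at nonzero `(a,b)` is at most `4`; in particular `β_{F,c} ≤ 4`. -/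
theorem square_cBCT_le_four (p n : ℕ) [Fact p.Prime] (hp2 : p ≠ 2) (hn : 0 < n)
    (c : GaloisField p n) (hc0 : c ≠ 0) (hc1 : c ≠ 1)
    (a b : GaloisField p n) (ha : a ≠ 0) (hb : b ≠ 0) :
    Nat.card {xg : GaloisField p n × GaloisField p n //
      (xg.1 + xg.2) ^ 2 - c * xg.1 ^ 2 = b ∧
      (xg.1 + xg.2 + a) ^ 2 - c⁻¹ * (xg.1 + a) ^ 2 = b} ≤ 4 := by
  classical
  have h2 : (2 : GaloisField p n) ≠ 0 := by
    intro h
    have hd : (p : ℕ) ∣ 2 := (CharP.cast_eq_zero_iff (GaloisField p n) p 2).mp (by exact_mod_cast h)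
    exact hp2 ((Nat.prime_dvd_prime_iff_eq (Fact.out) Nat.prime_two).mp hd)
  set d := c⁻¹ with hdd
  have hcd : c * d = 1 := mul_inv_cancel₀ hc0
  set A := c - d with hA
  set B := -(2 * d * a) with hB
  set D := a ^ 2 * (1 - d) with hD
  set P : Polynomial (GaloisField p n) := C (A ^ 2) * X ^ 4 + C (2 * A * B) * X ^ 3 +
      C (B ^ 2 + 2 * A * D - 4 * a ^ 2 * c) * X ^ 2 + C (2 * B * D) * X +
      C (D ^ 2 - 4 * a ^ 2 * b) with hP
  have hc4 : P.coeff 4 = A ^ 2 := by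
    simp only [hP, coeff_add, coeff_C_mul, coeff_X_pow, coeff_C, coeff_X]
    norm_num
  have hc2 : P.coeff 2 = B ^ 2 + 2 * A * D - 4 * a ^ 2 * c := by
    simp only [hP, coeff_add, coeff_C_mul, coeff_X_pow, coeff_C, coeff_X]
    norm_num
  have hPne : P ≠ 0 := by
    by_cases hcc : c = -1
    · intro h
      have h8 : B ^ 2 + 2 * A * D - 4 * a ^ 2 * c = 0 := by rw [← hc2, h, coeff_zero]
      have hdneg : d = -1 := by rw [hdd, hcc]; norm_num
      rw [hB, hD, hA, hdneg, hcc] at h8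
      have h0 : (2 : GaloisField p n) ^ 3 * a ^ 2 = 0 := by linear_combination h8
      exact (mul_ne_zero (pow_ne_zero 3 h2) (pow_ne_zero 2 ha)) h0
    · intro h
      have hA0 : A ≠ 0 := by
        rw [hA]
        intro h0
        have h1 : (c - 1) * (c + 1) = 0 := by linear_combination c * h0 + hcd
        rcases mul_eq_zero.mp h1 with h' | h'
        · exact hc1 (by linear_combination h')
        · exact hcc (by linear_combination h')
      have : A ^ 2 = 0 := by rw [← hc4, h, coeff_zero]
      exact pow_ne_zero 2 hA0 this
  have hdeg : P.natDegree ≤ 4 := by rw [hP]; compute_degree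
  have hroots : P.roots.toFinset.card ≤ 4 :=
    le_trans (Multiset.toFinset_card_le _) (le_trans (P.card_roots') hdeg)
  have key : ∀ x y : GaloisField p n, y ^ 2 - c * x ^ 2 = b → (y + a) ^ 2 - d * (x + a) ^ 2 = b →
      2 * a * y = -(A * x ^ 2 + B * x + D) := by
    intro x y h1 h2'
    rw [hA, hB, hD]
    linear_combination h2' - h1
  have root : ∀ x y : GaloisField p n, 2 * a * y = -(A * x ^ 2 + B * x + D) →
      y ^ 2 - c * x ^ 2 = b → P.eval x = 0 := by
    intro x y hL h1
    simp only [hP, eval_add, eval_mul, eval_pow, eval_C, eval_X]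
    linear_combination ((A * x ^ 2 + B * x + D) - 2 * a * y) * hL + 4 * a ^ 2 * h1
  let g : {xg : GaloisField p n × GaloisField p n //
      (xg.1 + xg.2) ^ 2 - c * xg.1 ^ 2 = b ∧
      (xg.1 + xg.2 + a) ^ 2 - c⁻¹ * (xg.1 + a) ^ 2 = b} →
      {z : GaloisField p n // z ∈ P.roots.toFinset} := fun s =>
    ⟨s.1.1, by
      rw [Multiset.mem_toFinset, mem_roots hPne]
      exact root s.1.1 (s.1.1 + s.1.2) (key _ _ s.2.1 s.2.2) s.2.1⟩
  have hginj : Function.Injective g := by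
    intro s t hst
    have hx : s.1.1 = t.1.1 := congrArg Subtype.val hst
    have h1 := key _ _ s.2.1 s.2.2
    have h2' := key _ _ t.2.1 t.2.2
    rw [hx] at h1
    have he : 2 * a * (t.1.1 + s.1.2) = 2 * a * (t.1.1 + t.1.2) := by rw [h1, h2']
    have hy : t.1.1 + s.1.2 = t.1.1 + t.1.2 :=
      mul_left_cancel₀ (mul_ne_zero h2 ha) he
    exact Subtype.ext (Prod.ext hx (add_left_cancel hy))
  calc Nat.card {xg : GaloisField p n × GaloisField p n //
      (xg.1 + xg.2) ^ 2 - c * xg.1 ^ 2 = b ∧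
      (xg.1 + xg.2 + a) ^ 2 - c⁻¹ * (xg.1 + a) ^ 2 = b}
      ≤ Nat.card {z : GaloisField p n // z ∈ P.roots.toFinset} :=
        Nat.card_le_card_of_injective g hginj
    _ = P.roots.toFinset.card := Nat.card_eq_finsetCard _
    _ ≤ 4 := hroots
end

section
/- Let p be an odd prime, n, k positive integers, c ∈ 𝔽_{p^n} with c ≠ 0, and F(x) = x^{p^k+1} on 𝔽_{p^n}. Then for all x, γ ∈ 𝔽_{p^n}: there exists b ∈ 𝔽_{p^n} such that both F(x+γ) − c·F(x) = b and F(x+γ+1) − c⁻¹·F(x+1) = b hold, if and only if (c − c⁻¹)·x^{p^k+1} + (1 − c⁻¹)·x^{p^k} + (1 − c⁻¹)·x + (γ^{p^k} + γ + 1 − c⁻¹) = 0. -/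
/-- for `F(x) = x^{p^k+1}` on `𝔽_{p^n}` (`p` odd, `c ≠ 0`), the
`c`-boomerang system at `a = 1` is solvable for some `b` iff the displayed polynomial
equation in `x` and `γ` holds. -/
theorem gold_boomerang_system_iff (p n k : ℕ) [Fact p.Prime] (hp2 : p ≠ 2)
    (hn : 0 < n) (hk : 0 < k) (c : GaloisField p n) (hc : c ≠ 0)
    (x γ : GaloisField p n) :
    (∃ b : GaloisField p n,
        (x + γ) ^ (p ^ k + 1) - c * x ^ (p ^ k + 1) = b ∧
        (x + γ + 1) ^ (p ^ k + 1) - c⁻¹ * (x + 1) ^ (p ^ k + 1) = b) ↔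
      (c - c⁻¹) * x ^ (p ^ k + 1) + (1 - c⁻¹) * x ^ (p ^ k) + (1 - c⁻¹) * x +
        (γ ^ (p ^ k) + γ + 1 - c⁻¹) = 0 := by
  have key : (∃ b : GaloisField p n,
        (x + γ) ^ (p ^ k + 1) - c * x ^ (p ^ k + 1) = b ∧
        (x + γ + 1) ^ (p ^ k + 1) - c⁻¹ * (x + 1) ^ (p ^ k + 1) = b) ↔
      (x + γ) ^ (p ^ k + 1) - c * x ^ (p ^ k + 1) =
        (x + γ + 1) ^ (p ^ k + 1) - c⁻¹ * (x + 1) ^ (p ^ k + 1) := by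
    constructor
    · rintro ⟨b, h1, h2⟩; exact h1.trans h2.symm
    · intro h; exact ⟨_, rfl, h.symm⟩
  rw [key]
  have hq : ∀ a b : GaloisField p n, (a + b) ^ (p ^ k) = a ^ (p ^ k) + b ^ (p ^ k) :=
    fun a b => add_pow_char_pow a b k (p := p)
  simp only [pow_succ, hq, one_pow]
  constructor
  · intro h; linear_combination -h
  · intro h; linear_combination -h
end

section
/- Let p be an odd prime, n, k positive integers, c ∈ 𝔽_{p^n} with c ∉ {0, 1, −1}, and F(x) = x^{p^k+1} on 𝔽_{p^n}. For d ∈ 𝔽_{p^n}, let δ_d = #{z ∈ 𝔽_{p^n} : z^{p^k} + z + d = 0}. Then the number of pairs (x, γ) ∈ 𝔽_{p^n} × 𝔽_{p^n} for which there exists b ∈ 𝔽_{p^n} with F(x+γ) − c·F(x) = b and F(x+γ+1) − c⁻¹·F(x+1) = b is at least δ_{1−c⁻¹} · (δ_{1+c} + 1). -/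
section Aux

variable {F : Type*} [Field F]

/-- Key algebraic identity for the main family of solutions `(x, γ) = (v⁻¹, u)`. -/
lemma gold_key_identity (q : ℕ) (hfrob : ∀ a b : F, (a + b) ^ q = a ^ q + b ^ q)
    (c u v : F) (hc0 : c ≠ 0) (hv0 : v ≠ 0)
    (hu : u ^ q + u + (1 - c⁻¹) = 0) (hv : v ^ q + v + (1 + c) = 0) :
    (v⁻¹ + u + 1) ^ (q + 1) - c⁻¹ * (v⁻¹ + 1) ^ (q + 1) =
      (v⁻¹ + u) ^ (q + 1) - c * (v⁻¹) ^ (q + 1) := by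
  have hvq : v ^ q = -v - (1 + c) := by linear_combination hv
  have huq : u ^ q = -u - (1 - c⁻¹) := by linear_combination hu
  have h1 : (v⁻¹ + u + 1) ^ q = (v ^ q)⁻¹ + u ^ q + 1 := by
    rw [hfrob, hfrob, one_pow, inv_pow]
  have h2 : (v⁻¹ + 1) ^ q = (v ^ q)⁻¹ + 1 := by
    rw [hfrob, one_pow, inv_pow]
  have h3 : (v⁻¹ + u) ^ q = (v ^ q)⁻¹ + u ^ q := by
    rw [hfrob, inv_pow]
  have h4 : (v⁻¹ : F) ^ q = (v ^ q)⁻¹ := inv_pow v q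
  have hvq0 : -v - (1 + c) ≠ 0 := by
    rw [← hvq]; exact pow_ne_zero q hv0
  rw [pow_succ, pow_succ, pow_succ, pow_succ, h1, h2, h3, h4, hvq, huq]
  field_simp
  ring

/-- Key algebraic identity for the secondary family `(x, γ) = (0, u)`. -/
lemma gold_key_identity₀ (q : ℕ) (hfrob : ∀ a b : F, (a + b) ^ q = a ^ q + b ^ q)
    (c u : F) (hu : u ^ q + u + (1 - c⁻¹) = 0) :
    ((0 : F) + u + 1) ^ (q + 1) - c⁻¹ * ((0 : F) + 1) ^ (q + 1) =
      ((0 : F) + u) ^ (q + 1) - c * (0 : F) ^ (q + 1) := by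
  have huq : u ^ q = -u - (1 - c⁻¹) := by linear_combination hu
  have h1 : (u + 1 : F) ^ q = u ^ q + 1 := by
    rw [hfrob, one_pow]
  simp only [zero_add]
  rw [pow_succ, pow_succ, pow_succ, h1, huq, one_pow]
  ring

end Aux

/-- for `F(x) = x^{p^k+1}` on `𝔽_{p^n}` (`p` odd, `c ∉ {0,1,−1}`), the
number of pairs `(x,γ)` solving the `c`-boomerang system at `a = 1` for some `b` is at
least `δ_{1−c⁻¹}·(δ_{1+c}+1)`, where `δ_d = #{z : z^{p^k} + z + d = 0}`. -/
theorem gold_boomerang_lower_bound (p n k : ℕ) [Fact p.Prime] (hp2 : p ≠ 2)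
    (hn : 0 < n) (hk : 0 < k) (c : GaloisField p n)
    (hc0 : c ≠ 0) (hc1 : c ≠ 1) (hcm1 : c ≠ -1) :
    Nat.card {z : GaloisField p n // z ^ (p ^ k) + z + (1 - c⁻¹) = 0} *
        (Nat.card {z : GaloisField p n // z ^ (p ^ k) + z + (1 + c) = 0} + 1) ≤
      Nat.card {xg : GaloisField p n × GaloisField p n // ∃ b : GaloisField p n,
        (xg.1 + xg.2) ^ (p ^ k + 1) - c * xg.1 ^ (p ^ k + 1) = b ∧
        (xg.1 + xg.2 + 1) ^ (p ^ k + 1) - c⁻¹ * (xg.1 + 1) ^ (p ^ k + 1) = b} := by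
  have hq0 : p ^ k ≠ 0 := pow_ne_zero k (Nat.Prime.pos Fact.out).ne'
  set q := p ^ k with hq
  have hfrob : ∀ a b : GaloisField p n, (a + b) ^ q = a ^ q + b ^ q :=
    fun a b => add_pow_char_pow a b p k
  set A := {z : GaloisField p n // z ^ q + z + (1 - c⁻¹) = 0} with hA
  set B := {z : GaloisField p n // z ^ q + z + (1 + c) = 0} with hB
  set T := {xg : GaloisField p n × GaloisField p n // ∃ b : GaloisField p n,
      (xg.1 + xg.2) ^ (q + 1) - c * xg.1 ^ (q + 1) = b ∧
      (xg.1 + xg.2 + 1) ^ (q + 1) - c⁻¹ * (xg.1 + 1) ^ (q + 1) = b} with hT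
  -- every `v ∈ B` is nonzero
  have hBne : ∀ v : B, (v : GaloisField p n) ≠ 0 := by
    rintro ⟨v, hv⟩ rfl
    apply hcm1
    have h0 : (0 : GaloisField p n) ^ q = 0 := zero_pow hq0
    have h1 : (1 : GaloisField p n) + c = 0 := by linear_combination hv - h0
    linear_combination h1
  -- the two families of solutions
  have mem1 : ∀ (u : A) (v : B), ∃ b : GaloisField p n,
      (((v : GaloisField p n)⁻¹ + (u : GaloisField p n)) ^ (q + 1)
          - c * ((v : GaloisField p n)⁻¹) ^ (q + 1) = b) ∧
      (((v : GaloisField p n)⁻¹ + (u : GaloisField p n) + 1) ^ (q + 1)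
          - c⁻¹ * ((v : GaloisField p n)⁻¹ + 1) ^ (q + 1) = b) := by
    intro u v
    exact ⟨_, rfl, gold_key_identity q hfrob c u v hc0 (hBne v) u.2 v.2⟩
  have mem2 : ∀ (u : A), ∃ b : GaloisField p n,
      (((0 : GaloisField p n) + (u : GaloisField p n)) ^ (q + 1)
          - c * (0 : GaloisField p n) ^ (q + 1) = b) ∧
      (((0 : GaloisField p n) + (u : GaloisField p n) + 1) ^ (q + 1)
          - c⁻¹ * ((0 : GaloisField p n) + 1) ^ (q + 1) = b) := by
    intro u
    exact ⟨_, rfl, gold_key_identity₀ q hfrob c u u.2⟩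
  let f : A × B ⊕ A → T := fun s =>
    Sum.elim (fun uv : A × B => (⟨((uv.2 : GaloisField p n)⁻¹, (uv.1 : GaloisField p n)),
        mem1 uv.1 uv.2⟩ : T))
      (fun u : A => (⟨((0 : GaloisField p n), (u : GaloisField p n)), mem2 u⟩ : T)) s
  have hinj : Function.Injective f := by
    rintro (⟨u₁, v₁⟩ | u₁) (⟨u₂, v₂⟩ | u₂) h <;>
      · have h' := congrArg (fun t : T => (t : GaloisField p n × GaloisField p n)) h
        simp only [f, Sum.elim_inl, Sum.elim_inr, Prod.mk.injEq] at h'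
        first
          | (exact absurd h'.1 (inv_ne_zero (hBne v₁)))
          | (exact absurd h'.1.symm (inv_ne_zero (hBne v₂)))
          | (obtain ⟨h1, h2⟩ := h'
             first
               | (exact congrArg Sum.inr (Subtype.ext h2))
               | (rw [show v₁ = v₂ from Subtype.ext (inv_injective h1),
                     show u₁ = u₂ from Subtype.ext h2]))
  calc Nat.card A * (Nat.card B + 1)
      = Nat.card (A × B) + Nat.card A := by
        rw [Nat.card_prod]; ring
    _ = Nat.card (A × B ⊕ A) := (Nat.card_sum).symm
    _ ≤ Nat.card T := Nat.card_le_card_of_injective f hinj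
end

section
/- Let p be an odd prime and n, k positive integers such that n / gcd(n,k) is odd. Then for every d ∈ 𝔽_{p^n}, the equation z^{p^k} + z + d = 0 has exactly one solution z in 𝔽_{p^n}; equivalently, the map z ↦ z^{p^k} + z is a bijection of 𝔽_{p^n}. -/
section aux

variable {p : ℕ} [Fact p.Prime] {F : Type*} [Field F] [CharP F p]
set_option linter.unusedSectionVars false

/-- Frobenius-power injectivity. -/
lemma frob_pow_inj (c : ℕ) : Function.Injective (fun x : F => x ^ p ^ c) := by
  intro x y h
  have h2 : (x - y) ^ p ^ c = 0 := by
    rw [sub_pow_char_pow]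
    simpa [sub_eq_zero] using h
  have h3 : x - y = 0 :=
    pow_eq_zero_iff (pow_ne_zero _ (Fact.out (p := p.Prime)).pos.ne') |>.mp h2
  exact sub_eq_zero.mp h3

lemma frob_fix_mul {z : F} {a : ℕ} (ha : z ^ p ^ a = z) (q : ℕ) :
    z ^ p ^ (a * q) = z := by
  induction q with
  | zero => simp
  | succ q ih =>
    have : z ^ p ^ (a * q + a) = (z ^ p ^ (a * q)) ^ p ^ a := by
      rw [← pow_mul, ← pow_add]
    rw [Nat.mul_succ, this, ih, ha]

lemma frob_fix_add_cancel {z : F} {a b : ℕ} (hab : z ^ p ^ (a + b) = z)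
    (ha : z ^ p ^ a = z) : z ^ p ^ b = z := by
  have h1 : (z ^ p ^ b) ^ p ^ a = z ^ p ^ a := by
    rw [← pow_mul, ← pow_add, Nat.add_comm b a, hab, ha]
  exact frob_pow_inj a h1

lemma frob_fix_gcd {z : F} : ∀ a b : ℕ, z ^ p ^ a = z → z ^ p ^ b = z →
    z ^ p ^ Nat.gcd a b = z := by
  intro a b
  induction a, b using Nat.gcd.induction with
  | H0 b => intro _ hb; simpa using hb
  | H1 a b ha ih =>
    intro hA hB
    rw [Nat.gcd_rec]
    apply ih _ hA
    -- need z ^ p ^ (b % a) = z from z ^ p ^ b = z and z ^ p ^ a = z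
    have hdiv : z ^ p ^ (a * (b / a)) = z := frob_fix_mul hA _
    have : a * (b / a) + b % a = b := Nat.div_add_mod b a
    exact frob_fix_add_cancel (by rw [this]; exact hB) hdiv

end aux

/-- for `p` odd with `n/gcd(n,k)` odd, the equation
`z^{p^k} + z + d = 0` has exactly one solution for every `d`; equivalently,
`z ↦ z^{p^k} + z` is a bijection of `𝔽_{p^n}`. -/
theorem linearized_trinomial_unique_root (p n k : ℕ) [Fact p.Prime] (hp2 : p ≠ 2)
    (hn : 0 < n) (hk : 0 < k) (hodd : Odd (n / Nat.gcd n k)) :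
    (∀ d : GaloisField p n,
        Nat.card {z : GaloisField p n // z ^ (p ^ k) + z + d = 0} = 1) ∧
      Function.Bijective (fun z : GaloisField p n => z ^ (p ^ k) + z) := by
  have hp : p.Prime := Fact.out
  have hpodd : Odd p := hp.odd_of_ne_two hp2
  set F := GaloisField p n
  haveI : Fintype F := Fintype.ofFinite F
  set d := Nat.gcd n k with hd
  have hdpos : 0 < d := Nat.gcd_pos_of_pos_left k hn
  -- arithmetic: gcd n (2*k) ∣ k
  have hgdvd : Nat.gcd n (2 * k) ∣ k := by
    set g := Nat.gcd n (2 * k) with hg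
    have h2d : g ∣ 2 * d := by
      have h1 : g ∣ 2 * n := Dvd.dvd.mul_left (Nat.gcd_dvd_left _ _) 2
      have h2 : g ∣ 2 * k := Nat.gcd_dvd_right _ _
      have : g ∣ Nat.gcd (2 * n) (2 * k) := Nat.dvd_gcd h1 h2
      rwa [Nat.gcd_mul_left] at this
    have hn' : g ∣ n := Nat.gcd_dvd_left _ _
    have hmd : n = d * (n / d) := (Nat.mul_div_cancel' (Nat.gcd_dvd_left n k)).symm
    have hgd : g ∣ d := by
      have : g ∣ Nat.gcd (2 * d) n := Nat.dvd_gcd h2d hn'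
      have hcalc : Nat.gcd (2 * d) n = d := by
        rw [hmd, Nat.mul_comm 2 d, Nat.gcd_mul_left]
        have : Nat.gcd 2 (n / d) = 1 := by
          exact Nat.coprime_two_left.mpr hodd
        rw [this, Nat.mul_one]
      rwa [hcalc] at this
    exact hgd.trans (Nat.gcd_dvd_right n k)
  -- key: injectivity kernel
  have hker : ∀ z : F, z ^ p ^ k = -z → z = 0 := by
    intro z hz
    have h2k : z ^ p ^ (2 * k) = z := by
      have : z ^ p ^ (k + k) = (z ^ p ^ k) ^ p ^ k := by rw [← pow_mul, ← pow_add]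
      rw [Nat.two_mul, this, hz]
      rw [(hpodd.pow).neg_pow, hz, neg_neg]
    have hnfix : z ^ p ^ n = z := by
      have hcard : Fintype.card F = p ^ n := by
        rw [← Nat.card_eq_fintype_card]; exact GaloisField.card p n hn.ne'
      rw [← hcard]; exact FiniteField.pow_card z
    have hgcd : z ^ p ^ Nat.gcd n (2 * k) = z := frob_fix_gcd _ _ hnfix h2k
    have hkfix : z ^ p ^ k = z := by
      obtain ⟨q, hq⟩ := hgdvd
      rw [hq]; exact frob_fix_mul hgcd q
    -- z = -z in char p ≠ 2
    have hzz : z = -z := by rw [← hz, hkfix]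
    have h2z : (2 : F) * z = 0 := by linear_combination hzz
    have h2ne : (2 : F) ≠ 0 := by
      intro h2
      have hpd : p ∣ 2 := (CharP.cast_eq_zero_iff F p 2).mp (by exact_mod_cast h2)
      exact hp2 ((Nat.prime_dvd_prime_iff_eq hp Nat.prime_two).mp hpd)
    rcases mul_eq_zero.mp h2z with h | h
    · exact absurd h h2ne
    · exact h
  have hinj : Function.Injective (fun z : F => z ^ p ^ k + z) := by
    intro x y hxy
    simp only at hxy
    have : (x - y) ^ p ^ k = -(x - y) := by
      rw [sub_pow_char_pow]
      have : x ^ p ^ k - y ^ p ^ k = -(x - y) := by linear_combination hxy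
      exact this
    have := hker _ this
    exact sub_eq_zero.mp this
  have hbij : Function.Bijective (fun z : F => z ^ p ^ k + z) :=
    Finite.injective_iff_bijective.mp hinj
  refine ⟨?_, hbij⟩
  intro c
  set e := Equiv.ofBijective _ hbij with he
  have hiff : ∀ z : F, (z ^ p ^ k + z + c = 0) ↔ z = e.symm (-c) := by
    intro z
    rw [Equiv.eq_symm_apply]
    constructor
    · intro h
      show z ^ p ^ k + z = -c
      linear_combination h
    · intro h
      have : z ^ p ^ k + z = -c := h
      linear_combination this
  rw [Nat.card_eq_one_iff_unique]
  constructor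
  · constructor
    intro a b
    ext
    rw [(hiff a).mp a.2, (hiff b).mp b.2]
  · exact ⟨⟨e.symm (-c), (hiff _).mpr rfl⟩⟩
end

section
/- Let p be an odd prime, n, k positive integers, g = gcd(n,k), and suppose n/g is even. Let c ∈ 𝔽_{p^n}, c ≠ 0, be such that c⁻¹ = z^{p^k} + z for some z ∈ 𝔽_{p^n}, z ≠ 0. Then the equation γ^{p^k} + γ + (1 − c⁻¹) = 0 has exactly p^g solutions γ in 𝔽_{p^n}. -/
/-!
The map `γ ↦ γ ^ p ^ k + γ` is additive and `z - 1/2` solves the equation, so the solutions form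
a coset of its kernel. A nonzero element of the kernel is a unit `u` with `u ^ (p ^ k - 1) = -1`.
In the cyclic group `𝔽ˣ` of order `p ^ n - 1` such units exist, because `2 (p ^ g - 1)` divides
`p ^ n - 1` (`n / g` is even and `p` is odd); they then form a coset of the kernel of
`u ↦ u ^ (p ^ k - 1)`, which has order `gcd (p ^ n - 1, p ^ k - 1) = p ^ g - 1`. Together with
`γ = 0` this gives `p ^ g` elements.
-/

namespace IsCyclic

variable {G : Type*} [CommGroup G] [IsCyclic G] [Finite G]

theorem exists_orderOf_eq_of_dvd {d : ℕ} (hd : d ∣ Nat.card G) : ∃ x : G, orderOf x = d := by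
  obtain ⟨g, hg⟩ := exists_ofOrder_eq_natCard (α := G)
  have hN : Nat.card G ≠ 0 := Nat.card_pos.ne'
  have hd0 : d ≠ 0 := by
    rintro rfl
    exact hN (Nat.eq_zero_of_zero_dvd hd)
  refine ⟨g ^ (Nat.card G / d), ?_⟩
  rw [orderOf_pow_of_dvd ((Nat.div_ne_zero_iff_of_dvd hd).mpr ⟨hN, hd0⟩)
    (hg.symm ▸ Nat.div_dvd_of_dvd hd), hg, Nat.div_div_self hd hN]

theorem exists_pow_ne_one_of_two_mul_gcd_dvd {m : ℕ} (h : 2 * (Nat.card G).gcd m ∣ Nat.card G) :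
    ∃ x : G, x ^ m ≠ 1 ∧ (x ^ m) ^ 2 = 1 := by
  obtain ⟨x, hx⟩ := exists_orderOf_eq_of_dvd h
  refine ⟨x, fun h1 => ?_, ?_⟩
  · have hdvd : 2 * (Nat.card G).gcd m ∣ (Nat.card G).gcd m :=
      Nat.dvd_gcd h (hx ▸ orderOf_dvd_of_pow_eq_one h1)
    have hpos : 0 < (Nat.card G).gcd m := Nat.gcd_pos_of_pos_left _ Nat.card_pos
    have := Nat.le_of_dvd hpos hdvd
    omega
  · rw [← pow_mul, ← orderOf_dvd_iff_pow_eq_one, hx, mul_comm m]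
    exact mul_dvd_mul_left 2 (Nat.gcd_dvd_right _ _)

theorem card_pow_eq_of_exists {m : ℕ} {a : G} (ha : ∃ y : G, y ^ m = a) :
    Nat.card {x : G // x ^ m = a} = (Nat.card G).gcd m := by
  obtain ⟨y, rfl⟩ := ha
  rw [← card_powMonoidHom_ker (G := G) m]
  exact Nat.card_congr ((powMonoidHom m).fiberEquivKer y)

end IsCyclic

theorem card_pow_expChar_pow_add_self_eq {R : Type*} [CommRing R] (p k : ℕ) [ExpChar R p] (a : R) :
    Nat.card {x : R // x ^ p ^ k + x = a ^ p ^ k + a} = Nat.card {x : R // x ^ p ^ k + x = 0} :=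
  Nat.card_congr (((iterateFrobenius R p k : R →+ R) + AddMonoidHom.id R).fiberEquivKer a)

theorem Nat.two_mul_pow_sub_one_dvd_pow_sub_one {p g n : ℕ} (hp : Odd p) (h : g * 2 ∣ n) :
    2 * (p ^ g - 1) ∣ p ^ n - 1 := by
  obtain ⟨t, rfl⟩ := h
  calc 2 * (p ^ g - 1) ∣ (p ^ g + 1) * (p ^ g - 1) := mul_dvd_mul_right hp.pow.add_one.two_dvd _
    _ = (p ^ g) ^ 2 - 1 := by rw [← Nat.sq_sub_sq, one_pow]
    _ ∣ ((p ^ g) ^ 2) ^ t - 1 := Nat.sub_one_dvd_pow_sub_one _ _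
    _ = p ^ (g * 2 * t) - 1 := by rw [← pow_mul, ← pow_mul, mul_assoc]

namespace FiniteField

variable {F : Type*} [Field F] [Finite F]

theorem card_units_pow_eq_neg_one {m : ℕ}
    (h : 2 * (Nat.card Fˣ).gcd m ∣ Nat.card Fˣ) :
    Nat.card {u : Fˣ // u ^ m = -1} = (Nat.card Fˣ).gcd m := by
  obtain ⟨x, hx1, hx2⟩ := IsCyclic.exists_pow_ne_one_of_two_mul_gcd_dvd h
  refine IsCyclic.card_pow_eq_of_exists ⟨x, ?_⟩
  have hsq : ((x ^ m : Fˣ) : F) ^ 2 = 1 := by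
    rw [← Units.val_pow_eq_pow_val, hx2, Units.val_one]
  rcases sq_eq_one_iff.mp hsq with h1 | h1
  · exact absurd (Units.ext h1) hx1
  · exact Units.ext h1

theorem card_pow_add_self_eq_zero {q : ℕ} (hq : q ≠ 0) :
    Nat.card {x : F // x ^ q + x = 0} = Nat.card {u : Fˣ // u ^ (q - 1) = -1} + 1 := by
  have hset : {x : F | x ^ q + x = 0} = insert 0 (Units.val '' {u : Fˣ | u ^ (q - 1) = -1}) := by
    ext x
    simp only [Set.mem_ofPred_eq, Set.mem_insert_iff, Set.mem_image]
    rcases eq_or_ne x 0 with rfl | hx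
    · simp [hq]
    have hfactor : x ^ q + x = (x ^ (q - 1) + 1) * x := by
      rw [add_mul, pow_sub_one_mul hq, one_mul]
    rw [hfactor, mul_eq_zero, add_eq_zero_iff_eq_neg, or_iff_left hx, or_iff_right hx]
    constructor
    · intro h
      exact ⟨Units.mk0 x hx, Units.ext (by simpa using h), rfl⟩
    · rintro ⟨u, hu, rfl⟩
      simpa using congrArg Units.val hu
  change Nat.card {x : F | x ^ q + x = 0} = _
  rw [Nat.card_coe_set_eq, hset, Set.ncard_insert_of_notMem (by simp),
    Set.ncard_image_of_injective _ Units.val_injective, ← Nat.card_coe_set_eq]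
  rfl

theorem card_pow_pow_add_self_eq_zero {p n k : ℕ} (hp : Odd p) (hF : Nat.card F = p ^ n)
    (heven : Even (n / n.gcd k)) :
    Nat.card {x : F // x ^ p ^ k + x = 0} = p ^ n.gcd k := by
  have hgcd : (Nat.card Fˣ).gcd (p ^ k - 1) = p ^ n.gcd k - 1 := by
    rw [Nat.card_units, hF, Nat.pow_sub_one_gcd_pow_sub_one]
  have hdvd : 2 * (Nat.card Fˣ).gcd (p ^ k - 1) ∣ Nat.card Fˣ := by
    rw [hgcd, Nat.card_units, hF]
    exact Nat.two_mul_pow_sub_one_dvd_pow_sub_one hp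
      (Nat.mul_dvd_of_dvd_div (Nat.gcd_dvd_left n k) heven.two_dvd)
  rw [card_pow_add_self_eq_zero (pow_pos hp.pos k).ne', card_units_pow_eq_neg_one hdvd,
    hgcd, Nat.sub_add_cancel (Nat.one_le_pow _ _ hp.pos)]

end FiniteField

theorem linearized_trinomial_p_pow_g_roots_general (p n k : ℕ) [Fact p.Prime] (hp2 : p ≠ 2)
    (hn : 0 < n) (heven : Even (n / Nat.gcd n k))
    (c : GaloisField p n)
    (hz : ∃ z : GaloisField p n, z ≠ 0 ∧ c⁻¹ = z ^ (p ^ k) + z) :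
    Nat.card {γ : GaloisField p n // γ ^ (p ^ k) + γ + (1 - c⁻¹) = 0} =
      p ^ Nat.gcd n k := by
  obtain ⟨z, -, hzc⟩ := hz
  have h2 : (2 : GaloisField p n) ≠ 0 :=
    Ring.two_ne_zero (by rwa [ringChar.eq (GaloisField p n) p])
  have h2pow : (2⁻¹ : GaloisField p n) ^ p ^ k = 2⁻¹ := by
    rw [inv_pow, ← iterateFrobenius_def, map_ofNat]
  have hsol (γ : GaloisField p n) :
      γ ^ p ^ k + γ + (1 - c⁻¹) = 0 ↔ γ ^ p ^ k + γ = (z - 2⁻¹) ^ p ^ k + (z - 2⁻¹) := by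
    have hhalf : (2 : GaloisField p n) * 2⁻¹ = 1 := mul_inv_cancel₀ h2
    rw [sub_pow_expChar_pow, h2pow, hzc]
    exact ⟨fun h => by linear_combination h + hhalf, fun h => by linear_combination h - hhalf⟩
  rw [Nat.card_congr (Equiv.subtypeEquivRight hsol), card_pow_expChar_pow_add_self_eq,
    FiniteField.card_pow_pow_add_self_eq_zero ((Fact.out : p.Prime).odd_of_ne_two hp2)
      (GaloisField.card p n hn.ne') heven]

/-- for `p` odd, `g = gcd(n,k)` with `n/g` even, and `c ≠ 0` such that
`c⁻¹ = z^{p^k} + z` for some `z ≠ 0`, the equation `γ^{p^k} + γ + (1 − c⁻¹) = 0` has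
exactly `p^g` solutions in `𝔽_{p^n}`. -/
theorem linearized_trinomial_p_pow_g_roots (p n k : ℕ) [Fact p.Prime] (hp2 : p ≠ 2)
    (hn : 0 < n) (hk : 0 < k) (heven : Even (n / Nat.gcd n k))
    (c : GaloisField p n) (hc : c ≠ 0)
    (hz : ∃ z : GaloisField p n, z ≠ 0 ∧ c⁻¹ = z ^ (p ^ k) + z) :
    Nat.card {γ : GaloisField p n // γ ^ (p ^ k) + γ + (1 - c⁻¹) = 0} =
      p ^ Nat.gcd n k :=
  linearized_trinomial_p_pow_g_roots_general p n k hp2 hn heven c hz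
end

section
/- Let n ≥ 2 be a positive integer, c ∈ 𝔽_{2^n} with c ≠ 0 and c ≠ 1, and F: 𝔽_{2^n} → 𝔽_{2^n} the inverse function F(x) = x^{2^n − 2}. Then for every b ∈ 𝔽_{2^n}, the c-BCT entry _cB_F(0, b) = 1, and for every a ∈ 𝔽_{2^n}, the c-BCT entry _cB_F(a, 0) = 1. -/
/-!
On a finite field with more than two elements, `x ^ (q - 2) = x⁻¹` for every `x`, including `0`.
Since inversion is an involution with `0⁻¹ = 0`, an equation `y⁻¹ + c * x⁻¹ = 0` is equivalent to
the linear equation `y = -c⁻¹ * x`, with no case split on `x = 0`. For `a = 0` the two c-BCT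
equations differ by `(c - c⁻¹) * x⁻¹`, forcing `x = 0` and then `γ = b⁻¹`; for `b = 0` they become
a linear system in `(x, γ)` that is nondegenerate as soon as `c ≠ c⁻¹`. In characteristic `2`,
`c ≠ 0, 1` gives `c ≠ c⁻¹`.
-/

theorem FiniteField.pow_natCard_sub_two_eq_inv {K : Type*} [Field K] [Finite K]
    (hK : 2 < Nat.card K) (x : K) : x ^ (Nat.card K - 2) = x⁻¹ := by
  have := Fintype.ofFinite K
  rcases eq_or_ne x 0 with rfl | hx
  · rw [zero_pow (by omega), inv_zero]
  · refine eq_inv_of_mul_eq_one_right ?_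
    rw [← pow_succ', show Nat.card K - 2 + 1 = Fintype.card K - 1 by
      rw [Nat.card_eq_fintype_card] at hK ⊢; omega]
    exact FiniteField.pow_card_sub_one_eq_one x hx

theorem CharTwo.ne_inv_of_ne_zero_of_ne_one {K : Type*} [Field K] [CharP K 2] {c : K}
    (hc0 : c ≠ 0) (hc1 : c ≠ 1) : c ≠ c⁻¹ := by
  intro h
  have hsq : c ^ 2 = 1 ^ 2 := by
    rw [sq, one_pow]
    nth_rw 2 [h]
    exact mul_inv_cancel₀ hc0
  exact hc1 (CharTwo.sq_inj.mp hsq)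

section InverseCBCT

variable {K : Type*} [Field K] {c : K}

theorem inv_add_mul_inv_eq_zero_iff {x y : K} : y⁻¹ + c * x⁻¹ = 0 ↔ y = -c⁻¹ * x := by
  rw [add_eq_zero_iff_eq_neg, ← neg_mul, inv_eq_iff_eq_inv, mul_inv, inv_inv, inv_neg]

/- Because `0⁻¹ = 0`, the single hypothesis `c ≠ c⁻¹` says `c ≠ 0` and `c ^ 2 ≠ 1`. -/

theorem ne_zero_of_ne_inv (hc : c ≠ c⁻¹) : c ≠ 0 := by
  rintro rfl
  exact hc inv_zero.symm

theorem one_sub_ne_zero_of_ne_inv (hc : c ≠ c⁻¹) : 1 - c ≠ 0 := by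
  intro h
  apply hc
  rw [← sub_eq_zero.mp h, inv_one]

theorem one_add_ne_zero_of_ne_inv (hc : c ≠ c⁻¹) : 1 + c ≠ 0 := by
  intro h
  apply hc
  rw [eq_neg_of_add_eq_zero_right h, inv_neg, inv_one]

theorem inv_cBCT_row_zero_iff (hc : c ≠ c⁻¹) (b x γ : K) :
    ((x + γ)⁻¹ + c * x⁻¹ = b ∧ (x + γ)⁻¹ + c⁻¹ * x⁻¹ = b) ↔ (x, γ) = (0, b⁻¹) := by
  constructor
  · rintro ⟨h₁, h₂⟩
    have hx : x = 0 := by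
      have : (c - c⁻¹) * x⁻¹ = 0 := by linear_combination h₁ - h₂
      simpa [sub_ne_zero.mpr hc] using this
    subst hx
    simpa [inv_eq_iff_eq_inv] using h₁
  · rintro ⟨⟩
    simp

theorem inv_cBCT_column_zero_iff (hc : c ≠ c⁻¹) (a x γ : K) :
    ((x + γ)⁻¹ + c * x⁻¹ = 0 ∧ (x + γ + a)⁻¹ + c⁻¹ * (x + a)⁻¹ = 0) ↔
      (x, γ) = (c * a / (1 - c), -(1 + c) * a / (1 - c)) := by
  have hc0 := ne_zero_of_ne_inv hc
  have hc1 := one_sub_ne_zero_of_ne_inv hc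
  rw [inv_add_mul_inv_eq_zero_iff, inv_add_mul_inv_eq_zero_iff, inv_inv, Prod.mk.injEq]
  constructor
  · rintro ⟨h₁, h₂⟩
    have hcc : c * c⁻¹ = 1 := mul_inv_cancel₀ hc0
    have hx : x * (1 - c) = c * a :=
      mul_left_cancel₀ (one_add_ne_zero_of_ne_inv hc)
        (by linear_combination c * (h₁ - h₂) - x * hcc)
    refine ⟨(eq_div_iff hc1).mpr hx, (eq_div_iff hc1).mpr ?_⟩
    linear_combination (1 - c) * h₁ - (c⁻¹ + 1) * hx - a * hcc
  · rintro ⟨rfl, rfl⟩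
    constructor <;> field_simp <;> ring

end InverseCBCT

/-- for the inverse function `F(x) = x^{2^n−2}` on `𝔽_{2^n}` (`n ≥ 2`)
and `c ≠ 0,1`, the `c`-BCT entries `_cB_F(0,b)` and `_cB_F(a,0)` all equal `1`. -/
theorem inverse_cBCT_boundary_entries (n : ℕ) (hn : 2 ≤ n)
    (c : GaloisField 2 n) (hc0 : c ≠ 0) (hc1 : c ≠ 1) :
    (∀ b : GaloisField 2 n,
      Nat.card {xg : GaloisField 2 n × GaloisField 2 n //
        (xg.1 + xg.2) ^ (2 ^ n - 2) + c * xg.1 ^ (2 ^ n - 2) = b ∧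
        (xg.1 + xg.2) ^ (2 ^ n - 2) + c⁻¹ * xg.1 ^ (2 ^ n - 2) = b} = 1) ∧
    (∀ a : GaloisField 2 n,
      Nat.card {xg : GaloisField 2 n × GaloisField 2 n //
        (xg.1 + xg.2) ^ (2 ^ n - 2) + c * xg.1 ^ (2 ^ n - 2) = 0 ∧
        (xg.1 + xg.2 + a) ^ (2 ^ n - 2) + c⁻¹ * (xg.1 + a) ^ (2 ^ n - 2) = 0} = 1) := by
  have hcard : Nat.card (GaloisField 2 n) = 2 ^ n := GaloisField.card 2 n (by omega)
  have hpow (x : GaloisField 2 n) : x ^ (2 ^ n - 2) = x⁻¹ := by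
    have h4 : 2 ^ 2 ≤ 2 ^ n := Nat.pow_le_pow_right two_pos hn
    rw [← hcard]
    exact FiniteField.pow_natCard_sub_two_eq_inv (by omega) x
  have hc := CharTwo.ne_inv_of_ne_zero_of_ne_one hc0 hc1
  simp only [hpow, inv_cBCT_row_zero_iff hc, inv_cBCT_column_zero_iff hc, Prod.mk.eta]
  exact ⟨fun _ => Nat.card_unique, fun _ => Nat.card_unique⟩
end

section
/- Let n ≥ 4 be a positive integer, c ∈ 𝔽_{2^n} with c ≠ 0 and c ≠ 1, and F: 𝔽_{2^n} → 𝔽_{2^n} the inverse function F(x) = x^{2^n − 2}. Then for all a, b ∈ 𝔽_{2^n}, the c-BCT entry _cB_F(a, b) ≤ 3; in particular the c-boomerang uniformity β_{F,c} ≤ 3. -/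
/-!
Write `y = x + γ`. The first equation determines `y` from `x`, so it suffices to bound the number
of `x` for which the system `y⁻¹ + c x⁻¹ = b`, `(y + a)⁻¹ + c⁻¹ (x + a)⁻¹ = b` has a solution `y`.
If none of `x, y, x + a, y + a` vanishes, clearing denominators and eliminating `y` leaves a
quadratic in `x` with leading coefficient `a b² c`, so there are at most two such `x` (the cases
`a = 0` and `b = 0` are linear). Each of the four degenerate cases forces the value of `x` and a
polynomial condition on `(a b, c)`; these four conditions are pairwise incompatible for
`c ∉ {0, 1}`, so at most one degenerate `x` occurs. The translation `(x, y) ↦ (x + a, y + a)`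
exchanges `c` and `c⁻¹`, which reduces the cases `x = a`, `y = a` to `x = 0`, `y = 0`.
-/

open Polynomial

theorem FiniteField.pow_card_sub_two_eq_inv {K : Type*} [GroupWithZero K] [Finite K]
    (hK : 2 < Nat.card K) (x : K) : x ^ (Nat.card K - 2) = x⁻¹ := by
  rcases eq_or_ne x 0 with rfl | hx
  · rw [zero_pow (by omega), inv_zero]
  · have := Fintype.ofFinite K
    rw [Nat.card_eq_fintype_card] at hK ⊢
    refine eq_inv_of_mul_eq_one_left ?_
    rw [← pow_succ, show Fintype.card K - 2 + 1 = Fintype.card K - 1 by omega,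
      FiniteField.pow_card_sub_one_eq_one x hx]

theorem Set.encard_setOf_quadratic_eq_zero_le_two {R : Type*} [CommRing R] [IsDomain R]
    {α β γ : R} (hα : α ≠ 0) : {x | α * x ^ 2 + β * x + γ = 0}.encard ≤ 2 := by
  classical
  set p : R[X] := C α * X ^ 2 + C β * X + C γ
  have hdeg : p.natDegree = 2 := natDegree_quadratic hα
  have hp : p ≠ 0 := ne_zero_of_natDegree_gt (n := 0) (by omega)
  calc {x | α * x ^ 2 + β * x + γ = 0}.encard
      ≤ (p.roots.toFinset : Set R).encard :=
        Set.encard_le_encard fun x hx => by simpa [p, mem_roots hp] using hx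
    _ = p.roots.toFinset.card := Set.encard_coe_eq_coe_finsetCard _
    _ ≤ 2 := by
        exact_mod_cast hdeg ▸ (Multiset.toFinset_card_le _).trans (card_roots' p)

section InvBoomerang

variable {K : Type*} [Field K]

/-- `y` stands for `x + γ`; Lean's `0⁻¹ = 0` is the convention `F(0) = 0`. -/
def InvBoomerangSystem (c a b x y : K) : Prop :=
  y⁻¹ + c * x⁻¹ = b ∧ (y + a)⁻¹ + c⁻¹ * (x + a)⁻¹ = b

/-- The value of `x` forced in the degenerate cases `x = 0`, `y = 0`, `x = a`, `y = a`. -/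
def degenerateRoot (c a b : K) : Fin 4 → K := ![0, c / b, a, a + c⁻¹ / b]

def degenerateCond (c t : K) : Fin 4 → K :=
  ![t ^ 2 * c + t + 1, c ^ 2 + c * t + t + t * c ^ 2 + t ^ 2 * c,
    t ^ 2 * c⁻¹ + t + 1, c⁻¹ ^ 2 + c⁻¹ * t + t + t * c⁻¹ ^ 2 + t ^ 2 * c⁻¹]

variable [CharP K 2] {a b c t x y : K}

namespace InvBoomerangSystem

theorem shift_iff :
    InvBoomerangSystem c a b x y ↔ InvBoomerangSystem c⁻¹ a b (x + a) (y + a) := by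
  simp only [InvBoomerangSystem, inv_inv, add_assoc, CharTwo.add_self_eq_zero, add_zero]
  exact and_comm

theorem x_eq_zero_of_a_eq_zero (hc0 : c ≠ 0) (hc1 : c ≠ 1) (h : InvBoomerangSystem c 0 b x y) :
    x = 0 := by
  obtain ⟨h1, h2⟩ := h
  simp only [add_zero] at h2
  have hc : c + c⁻¹ ≠ 0 := by grind
  have : (c + c⁻¹) * x⁻¹ = 0 := by grind
  simpa [hc] using this

theorem x_eq_of_b_eq_zero (hc0 : c ≠ 0) (hc1 : c ≠ 1) (h : InvBoomerangSystem c a 0 x y) :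
    x = a * c / (c + 1) := by
  obtain ⟨h1, h2⟩ := h
  have hy : y = c⁻¹ * x := by
    rw [inv_eq_iff_eq_inv.mp (CharTwo.add_eq_zero.mp h1), mul_inv, inv_inv]
  have hya : y + a = c * (x + a) := by
    rw [inv_eq_iff_eq_inv.mp (CharTwo.add_eq_zero.mp h2), mul_inv, inv_inv, inv_inv]
  have hc : c + 1 ≠ 0 := fun h => hc1 (CharTwo.add_eq_zero.mp h)
  rw [eq_div_iff hc]
  subst hy
  field_simp at hya
  grind

theorem quadratic_eq_zero (hc0 : c ≠ 0) (hx : x ≠ 0) (hy : y ≠ 0) (hxa : x ≠ a) (hya : y ≠ a)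
    (h : InvBoomerangSystem c a b x y) :
    a * b ^ 2 * c * x ^ 2 + (1 + a * b + c ^ 2 + a ^ 2 * b ^ 2 * c + a * b * c ^ 2) * x
      + (a * c + a * c ^ 2 + a ^ 2 * b * c ^ 2) = 0 := by
  obtain ⟨h1, h2⟩ := h
  have hxa' : x + a ≠ 0 := fun h => hxa (CharTwo.add_eq_zero.mp h)
  have hya' : y + a ≠ 0 := fun h => hya (CharTwo.add_eq_zero.mp h)
  field_simp at h1 h2
  linear_combination (norm := (ring_nf; simp [CharTwo.two_eq_zero]))
    (b * x + c) * h2 + (b * c * (x + a) + 1) * h1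

theorem cond_of_x_eq_zero (ha : a ≠ 0) (hb : b ≠ 0) (hc1 : c ≠ 1)
    (h : InvBoomerangSystem c a b 0 y) : (a * b) ^ 2 * c + a * b + 1 = 0 := by
  obtain ⟨h1, h2⟩ := h
  simp only [inv_zero, mul_zero, add_zero, zero_add] at h1 h2
  obtain rfl : y = b⁻¹ := inv_eq_iff_eq_inv.mp h1
  have hu : b⁻¹ + a ≠ 0 := by
    intro hu
    rw [hu, inv_zero, zero_add] at h2
    grind
  field_simp at h2
  grind

theorem cond_of_y_eq_zero (ha : a ≠ 0) (hb : b ≠ 0) (hc0 : c ≠ 0) (hc1 : c ≠ 1)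
    (h : InvBoomerangSystem c a b x 0) :
    x = c / b ∧ c ^ 2 + c * (a * b) + a * b + a * b * c ^ 2 + (a * b) ^ 2 * c = 0 := by
  obtain ⟨h1, h2⟩ := h
  simp only [inv_zero, zero_add] at h1 h2
  obtain rfl : x = c / b := by grind
  refine ⟨rfl, ?_⟩
  have hu : c + a * b ≠ 0 := by
    intro hu
    have hxa : c / b + a = 0 := by grind
    rw [hxa, inv_zero, mul_zero, add_zero] at h2
    grind
  field_simp at h2
  grind

theorem exists_degenerate (ha : a ≠ 0) (hb : b ≠ 0) (hc0 : c ≠ 0) (hc1 : c ≠ 1)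
    (h : InvBoomerangSystem c a b x y) (hdeg : x = 0 ∨ y = 0 ∨ x = a ∨ y = a) :
    ∃ i, degenerateCond c (a * b) i = 0 ∧ x = degenerateRoot c a b i := by
  have hc0' : c⁻¹ ≠ 0 := inv_ne_zero hc0
  have hc1' : c⁻¹ ≠ 1 := inv_ne_one.mpr hc1
  rcases hdeg with rfl | rfl | rfl | rfl
  · exact ⟨0, h.cond_of_x_eq_zero ha hb hc1, rfl⟩
  · obtain ⟨rfl, hcond⟩ := h.cond_of_y_eq_zero ha hb hc0 hc1
    exact ⟨1, hcond, rfl⟩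
  · have h' := shift_iff.mp h
    rw [CharTwo.add_self_eq_zero] at h'
    exact ⟨2, h'.cond_of_x_eq_zero ha hb hc1', rfl⟩
  · have h' := shift_iff.mp h
    rw [CharTwo.add_self_eq_zero] at h'
    obtain ⟨hx, hcond⟩ := h'.cond_of_y_eq_zero ha hb hc0' hc1'
    exact ⟨3, hcond, by simp only [degenerateRoot, Matrix.cons_val]; grind⟩

end InvBoomerangSystem

theorem eq_of_degenerateCond_eq_zero (hc0 : c ≠ 0) (hc1 : c ≠ 1) {i j : Fin 4}
    (hi : degenerateCond c t i = 0) (hj : degenerateCond c t j = 0) : i = j := by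
  fin_cases i <;> fin_cases j <;>
    simp only [degenerateCond, Fin.reduceFinMk, Matrix.cons_val] at hi hj <;> first | rfl | grind

theorem encard_setOf_invBoomerangSystem_le_three (hc0 : c ≠ 0) (hc1 : c ≠ 1) (a b : K) :
    {x | ∃ y, InvBoomerangSystem c a b x y}.encard ≤ 3 := by
  rcases eq_or_ne a 0 with rfl | ha
  · calc _ ≤ ({0} : Set K).encard := Set.encard_le_encard <| by
          rintro _ ⟨_, h⟩; exact h.x_eq_zero_of_a_eq_zero hc0 hc1
      _ ≤ 3 := by simp
  rcases eq_or_ne b 0 with rfl | hb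
  · calc _ ≤ ({a * c / (c + 1)} : Set K).encard := Set.encard_le_encard <| by
          rintro _ ⟨_, h⟩; exact h.x_eq_of_b_eq_zero hc0 hc1
      _ ≤ 3 := by simp
  set D := {x | ∃ i, degenerateCond c (a * b) i = 0 ∧ x = degenerateRoot c a b i}
  have hD : D.encard ≤ 1 := Set.encard_le_one_iff.mpr fun x x' ⟨i, hi, hx⟩ ⟨j, hj, hx'⟩ => by
    rw [hx, hx', eq_of_degenerateCond_eq_zero hc0 hc1 hi hj]
  have hQ := Set.encard_setOf_quadratic_eq_zero_le_two
    (β := 1 + a * b + c ^ 2 + a ^ 2 * b ^ 2 * c + a * b * c ^ 2)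
    (γ := a * c + a * c ^ 2 + a ^ 2 * b * c ^ 2)
    (mul_ne_zero (mul_ne_zero ha (pow_ne_zero 2 hb)) hc0)
  calc _ ≤ (_ ∪ D).encard := Set.encard_le_encard ?_
    _ ≤ 2 + 1 := (Set.encard_union_le _ _).trans (add_le_add hQ hD)
    _ = 3 := rfl
  rintro x ⟨y, h⟩
  by_cases hdeg : x = 0 ∨ y = 0 ∨ x = a ∨ y = a
  · exact Or.inr (h.exists_degenerate ha hb hc0 hc1 hdeg)
  · push Not at hdeg
    obtain ⟨hx, hy, hxa, hya⟩ := hdeg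
    exact Or.inl (h.quadratic_eq_zero hc0 hx hy hxa hya)

theorem card_invBoomerangSystem_pairs_le_three (hc0 : c ≠ 0) (hc1 : c ≠ 1) (a b : K) :
    Nat.card {xg : K × K // InvBoomerangSystem c a b xg.1 (xg.1 + xg.2)} ≤ 3 := by
  set S := {xg : K × K | InvBoomerangSystem c a b xg.1 (xg.1 + xg.2)}
  have hinj : S.InjOn Prod.fst := by
    rintro ⟨x, g⟩ ⟨h, -⟩ ⟨x', g'⟩ ⟨h', -⟩ (rfl : x = x')
    have : (x + g)⁻¹ = (x + g')⁻¹ := by linear_combination h - h'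
    simpa using inv_injective this
  have himage : Prod.fst '' S ⊆ {x | ∃ y, InvBoomerangSystem c a b x y} := by
    rintro _ ⟨⟨x, g⟩, h, rfl⟩
    exact ⟨x + g, h⟩
  calc Nat.card S = S.ncard := Nat.card_coe_set_eq S
    _ ≤ 3 := ENat.toNat_le_of_le_natCast <| hinj.encard_image ▸
        (Set.encard_le_encard himage).trans (encard_setOf_invBoomerangSystem_le_three hc0 hc1 a b)

end InvBoomerang

/-- for the inverse function `F(x) = x^{2^n−2}` on `𝔽_{2^n}` (`n ≥ 4`)
and `c ≠ 0,1`, every `c`-BCT entry is at most `3`; in particular `β_{F,c} ≤ 3`. -/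
theorem inverse_cBCT_le_three (n : ℕ) (hn : 4 ≤ n)
    (c : GaloisField 2 n) (hc0 : c ≠ 0) (hc1 : c ≠ 1) (a b : GaloisField 2 n) :
    Nat.card {xg : GaloisField 2 n × GaloisField 2 n //
      (xg.1 + xg.2) ^ (2 ^ n - 2) + c * xg.1 ^ (2 ^ n - 2) = b ∧
      (xg.1 + xg.2 + a) ^ (2 ^ n - 2) + c⁻¹ * (xg.1 + a) ^ (2 ^ n - 2) = b} ≤ 3 := by
  have hcard : Nat.card (GaloisField 2 n) = 2 ^ n := GaloisField.card 2 n (by omega)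
  have hcard_gt : 2 < Nat.card (GaloisField 2 n) := by
    simpa [hcard] using Nat.pow_lt_pow_right one_lt_two (by omega : 1 < n)
  have hinv (x : GaloisField 2 n) : x ^ (2 ^ n - 2) = x⁻¹ := by
    rw [← hcard]
    exact FiniteField.pow_card_sub_two_eq_inv hcard_gt x
  simp only [hinv]
  exact card_invBoomerangSystem_pairs_le_three hc0 hc1 a b
end
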